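/- arXiv:2009.10540 — 11 statements merged into one kernel-verified Lean document; each statement's English description precedes it below -/
import Mathlib

section
/- Let Z be a real normed space, let z_1^*, …, z_m^* be continuous linear functionals on Z and s_1, …, s_m real numbers, and let P = {z ∈ Z : ⟨z_i^*, z⟩ ≤ s_i for all i = 1,…,m}. Let Z_1 and Z_2 be closed linear subspaces of Z such that Z_1 ⊆ ⋂_{i=1}^m ker(z_i^*), Z_1 ∩ Z_2 = {0}, Z_1 + Z_2 = Z, and Z_2 is finite-dimensional. Set P̂ = {z ∈ Z_2 : ⟨z_i^*, z⟩ ≤ s_i for all i = 1,…,m}. Then P = Z_1 + P̂ (Minkowski sum) and rint(P) = Z_1 + rint(P̂). -/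
/-!
Since `Z₁ + Z₂ = Z` and every `zᵢ*` vanishes on `Z₁`, the polyhedron `P` is invariant under
translation by `Z₁`, which gives `P = Z₁ + (P ∩ Z₂) = Z₁ + P̂`. As `Z₁` is closed and `Z₂` is finite
dimensional, they are topological complements, so `(a, b) ↦ a + b` is a continuous linear
equivalence `Z₁ × Z₂ ≃ Z` carrying `Z₁ × P̂` onto `P`. Relative interiors commute with continuous
affine equivalences and with products, and the relative interior of the whole space `Z₁` is `Z₁`.
-/

open Set Pointwise

theorem intrinsicInterior_univ {𝕜 V P : Type*} [Ring 𝕜] [AddCommGroup V] [Module 𝕜 V]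
    [TopologicalSpace P] [AddTorsor V P] : intrinsicInterior 𝕜 (univ : Set P) = univ := by
  simpa using interior_subset_intrinsicInterior (𝕜 := 𝕜) (s := (univ : Set P))

namespace Submodule

theorem coe_add_inter_eq_of_add_mem {R E : Type*} [Ring R] [AddCommGroup E] [Module R E]
    {p q : Submodule R E} (hpq : p ⊔ q = ⊤) {S : Set E} (hS : ∀ x ∈ S, ∀ a ∈ p, x + a ∈ S) :
    (p : Set E) + (S ∩ q) = S := by
  refine subset_antisymm ?_ fun z hz ↦ ?_
  · rintro _ ⟨a, ha, b, ⟨hb, -⟩, rfl⟩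
    simpa only [add_comm] using hS b hb a ha
  · obtain ⟨a, ha, b, hb, rfl⟩ := mem_sup.1 (hpq ▸ mem_top : z ∈ p ⊔ q)
    refine ⟨a, ha, b, ⟨?_, hb⟩, rfl⟩
    simpa using hS _ hz (-a) (neg_mem ha)

theorem coe_add_image_subtype_eq_image_prodEquivOfIsTopCompl {R E : Type*} [Ring R]
    [AddCommGroup E] [Module R E] [TopologicalSpace E] [IsTopologicalAddGroup E]
    {p q : Submodule R E} (h : IsTopCompl p q) (T : Set q) :
    (p : Set E) + q.subtype '' T = prodEquivOfIsTopCompl p q h '' (univ ×ˢ T) := by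
  ext z
  simp only [mem_add, mem_image, prodEquivOfIsTopCompl_apply, Prod.exists]
  aesop

theorem IsTopCompl.intrinsicInterior_add {𝕜 E : Type*} [NormedField 𝕜] [NormedAddCommGroup E]
    [NormedSpace 𝕜 E] {p q : Submodule 𝕜 E} (h : IsTopCompl p q) {t : Set E} (ht : t ⊆ q) :
    intrinsicInterior 𝕜 ((p : Set E) + t) = p + intrinsicInterior 𝕜 t := by
  let ι := q.subtypeₗᵢ.toAffineIsometry
  obtain ⟨T, rfl⟩ : ∃ T : Set q, ι '' T = t :=
    ⟨(↑) ⁻¹' t, image_preimage_eq_of_subset (by simpa [ι] using ht)⟩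
  rw [ι.intrinsicInterior_image]
  simp only [ι, LinearIsometry.coe_toAffineIsometry, coe_subtypeₗᵢ,
    coe_add_image_subtype_eq_image_prodEquivOfIsTopCompl h]
  rw [← ContinuousLinearEquiv.coe_toContinuousAffineEquiv,
    ContinuousAffineEquiv.intrinsicInterior_image, intrinsicInterior_prod_eq,
    intrinsicInterior_univ]

end Submodule

theorem stmt_0_general {Z : Type*} [NormedAddCommGroup Z] [NormedSpace ℝ Z]
    {m : ℕ} (zs : Fin m → Z →L[ℝ] ℝ) (s : Fin m → ℝ)
    (Z1 Z2 : Submodule ℝ Z)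
    (hZ1closed : IsClosed (Z1 : Set Z))
    (hker : ∀ x ∈ Z1, ∀ i, zs i x = 0)
    (hinf : Z1 ⊓ Z2 = ⊥) (hsup : Z1 ⊔ Z2 = ⊤)
    (hfin : FiniteDimensional ℝ Z2)
    (P Phat : Set Z)
    (hP : P = {z | ∀ i, zs i z ≤ s i})
    (hPhat : Phat = {z | z ∈ Z2 ∧ ∀ i, zs i z ≤ s i}) :
    P = (Z1 : Set Z) + Phat ∧
      intrinsicInterior ℝ P = (Z1 : Set Z) + intrinsicInterior ℝ Phat := by
  have hPhat_eq : Phat = P ∩ Z2 := by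
    ext z
    simp [hP, hPhat, and_comm]
  have hP_add_mem : ∀ x ∈ P, ∀ a ∈ Z1, x + a ∈ P := by
    subst hP
    intro x hx a ha i
    simpa [hker a ha i] using hx i
  have hdecomp : P = (Z1 : Set Z) + Phat := by
    rw [hPhat_eq, Submodule.coe_add_inter_eq_of_add_mem hsup hP_add_mem]
  have htop : Submodule.IsTopCompl Z1 Z2 :=
    Submodule.IsCompl.isTopCompl_of_isClosed_of_finiteDimensional
      ⟨disjoint_iff.2 hinf, codisjoint_iff.2 hsup⟩ hZ1closed
  refine ⟨hdecomp, ?_⟩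
  rw [hdecomp, htop.intrinsicInterior_add (hPhat_eq ▸ inter_subset_right)]

/-- Decomposition of a polyhedron `P = Z₁ + P̂` and of its relative
interior `rint P = Z₁ + rint P̂`. -/
theorem stmt_0 {Z : Type*} [NormedAddCommGroup Z] [NormedSpace ℝ Z]
    {m : ℕ} (zs : Fin m → Z →L[ℝ] ℝ) (s : Fin m → ℝ)
    (Z1 Z2 : Submodule ℝ Z)
    (hZ1closed : IsClosed (Z1 : Set Z)) (hZ2closed : IsClosed (Z2 : Set Z))
    (hker : ∀ x ∈ Z1, ∀ i, zs i x = 0)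
    (hinf : Z1 ⊓ Z2 = ⊥) (hsup : Z1 ⊔ Z2 = ⊤)
    (hfin : FiniteDimensional ℝ Z2)
    (P Phat : Set Z)
    (hP : P = {z | ∀ i, zs i z ≤ s i})
    (hPhat : Phat = {z | z ∈ Z2 ∧ ∀ i, zs i z ≤ s i}) :
    P = (Z1 : Set Z) + Phat ∧
      intrinsicInterior ℝ P = (Z1 : Set Z) + intrinsicInterior ℝ Phat :=
  stmt_0_general zs s Z1 Z2 hZ1closed hker hinf hsup hfin P Phat hP hPhat
end

section
/- Let Z be a real normed space, let u_1^*, …, u_n^* be continuous linear functionals on Z and s_1, …, s_n real numbers, and suppose P = {z ∈ Z : ⟨u_i^*, z⟩ ≤ s_i for all i = 1,…,n} is nonempty. Let Ī_P = {i ∈ {1,…,n} : ⟨u_i^*, z⟩ = s_i for every z ∈ P}. Then rint(P) = {z ∈ Z : ⟨u_i^*, z⟩ < s_i for all i ∉ Ī_P} ∩ ⋂_{i ∈ Ī_P} {z ∈ Z : ⟨u_i^*, z⟩ = s_i}. -/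
/-!
If `z ∈ rint P` and `⟨u_i, z⟩ = s_i`, then `u_i` attains its maximum over `P` at a relative
interior point. Every segment from a point `y ∈ P` through `z` can be prolonged beyond `z` inside
`P`, which forces `u_i` to be constant on `P`, i.e. `i ∈ Ī_P`. Conversely, the implicit equalities
persist on the affine span of `P`, so inside that span `P` is cut out near such a `z` by the strict
inequalities alone, which define an open set.
-/

open Set Filter Topology

theorem AffineMap.apply_eq_of_mem_affineSpan {k V₁ P₁ V₂ P₂ : Type*} [Ring k]
    [AddCommGroup V₁] [Module k V₁] [AddTorsor V₁ P₁]
    [AddCommGroup V₂] [Module k V₂] [AddTorsor V₂ P₂]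
    (f : P₁ →ᵃ[k] P₂) {s : Set P₁} {c : P₂} (h : ∀ x ∈ s, f x = c)
    {x : P₁} (hx : x ∈ affineSpan k s) : f x = c := by
  have hfx : f x ∈ affineSpan k (f '' s) :=
    AffineSubspace.map_span f s ▸ AffineSubspace.mem_map_of_mem f hx
  have himage : f '' s ⊆ {c} := image_subset_iff.2 h
  simpa using affineSpan_mono k himage hfx

section IntrinsicInterior

variable {E : Type*} [AddCommGroup E] [Module ℝ E] [TopologicalSpace E]

theorem IsOpen.inter_affineSpan_subset_intrinsicInterior {s U : Set E} (hU : IsOpen U)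
    (hUs : U ∩ affineSpan ℝ s ⊆ s) : U ∩ affineSpan ℝ s ⊆ intrinsicInterior ℝ s := by
  rintro z ⟨hzU, hzs⟩
  refine ⟨⟨z, hzs⟩, interior_maximal ?_ (hU.preimage continuous_subtype_val) hzU, rfl⟩
  exact fun w hw => hUs ⟨hw, w.2⟩

variable [IsTopologicalAddGroup E] [ContinuousSMul ℝ E]

theorem exists_pos_add_smul_sub_mem_of_mem_intrinsicInterior {s : Set E} {x y : E}
    (hx : x ∈ intrinsicInterior ℝ s) (hy : y ∈ s) : ∃ t > (0 : ℝ), x + t • (x - y) ∈ s := by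
  obtain ⟨x', hx', rfl⟩ := hx
  have hspan (t : ℝ) : (x' : E) + t • ((x' : E) - y) ∈ affineSpan ℝ s := by
    rw [add_comm]
    exact AffineSubspace.smul_vsub_vadd_mem _ t x'.2 (subset_affineSpan ℝ s hy) x'.2
  let path : ℝ → affineSpan ℝ s := fun t => ⟨_, hspan t⟩
  have hpath : Tendsto path (𝓝[>] 0) (𝓝 x') := by
    refine (Continuous.tendsto' ?_ 0 x' (by simp [path])).mono_left nhdsWithin_le_nhds
    exact Continuous.subtype_mk (by fun_prop) _
  obtain ⟨t, ht, hts⟩ :=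
    ((hpath.eventually (isOpen_interior.mem_nhds hx')).and self_mem_nhdsWithin).exists
  exact ⟨t, hts, interior_subset (s := ((↑) : affineSpan ℝ s → E) ⁻¹' s) ht⟩

theorem LinearMap.eq_of_isMaxOn_of_mem_intrinsicInterior (f : E →ₗ[ℝ] ℝ) {s : Set E} {x y : E}
    (hmax : IsMaxOn f s x) (hx : x ∈ intrinsicInterior ℝ s) (hy : y ∈ s) : f y = f x := by
  obtain ⟨t, ht, hts⟩ := exists_pos_add_smul_sub_mem_of_mem_intrinsicInterior hx hy
  have hfy : f y ≤ f x := hmax hy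
  have : f (x + t • (x - y)) ≤ f x := hmax hts
  simp only [map_add, map_smul, map_sub, smul_eq_mul] at this
  nlinarith

end IntrinsicInterior

theorem stmt_1_general {Z : Type*} [NormedAddCommGroup Z] [NormedSpace ℝ Z]
    {n : ℕ} (u : Fin n → Z →L[ℝ] ℝ) (s : Fin n → ℝ)
    (P : Set Z) (hP : P = {z | ∀ i, u i z ≤ s i})
    (Ibar : Set (Fin n)) (hIbar : Ibar = {i | ∀ z ∈ P, u i z = s i}) :
    intrinsicInterior ℝ P =
      {z | ∀ i ∉ Ibar, u i z < s i} ∩ ⋂ i ∈ Ibar, {z | u i z = s i} := by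
  rw [Set.ext_iff] at hP hIbar
  have hmem {z : Z} (hstrict : ∀ i ∉ Ibar, u i z < s i) (hactive : ∀ i ∈ Ibar, u i z = s i) :
      z ∈ P := by
    refine (hP z).2 fun i => ?_
    by_cases hi : i ∈ Ibar
    exacts [(hactive i hi).le, (hstrict i hi).le]
  ext z
  constructor
  · intro hz
    have hzP : z ∈ P := intrinsicInterior_subset hz
    refine ⟨fun i hi => ((hP z).1 hzP i).lt_of_ne fun heq => hi ((hIbar i).2 ?_),
      mem_iInter₂.2 fun i hi => (hIbar i).1 hi z hzP⟩
    have hmax : IsMaxOn (u i) P z := fun w hw => heq ▸ (hP w).1 hw i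
    intro y hy
    exact heq ▸ (u i).toLinearMap.eq_of_isMaxOn_of_mem_intrinsicInterior hmax hz hy
  · rintro ⟨hstrict, hactive⟩
    rw [mem_iInter₂] at hactive
    have hopen : IsOpen {w | ∀ i ∉ Ibar, u i w < s i} := by
      simp only [ofPred_forall]
      exact isOpen_iInter_of_finite fun i =>
        isOpen_iInter_of_finite fun _ => isOpen_lt (u i).continuous continuous_const
    have hsub : {w | ∀ i ∉ Ibar, u i w < s i} ∩ affineSpan ℝ P ⊆ P := fun w ⟨hw, hwspan⟩ =>
      hmem hw fun i hi =>
        (u i).toLinearMap.toAffineMap.apply_eq_of_mem_affineSpan ((hIbar i).1 hi) hwspan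
    exact hopen.inter_affineSpan_subset_intrinsicInterior hsub
      ⟨hstrict, subset_affineSpan ℝ P (hmem hstrict hactive)⟩

/-- Description of the relative interior of a polyhedron. -/
theorem stmt_1 {Z : Type*} [NormedAddCommGroup Z] [NormedSpace ℝ Z]
    {n : ℕ} (u : Fin n → Z →L[ℝ] ℝ) (s : Fin n → ℝ)
    (P : Set Z) (hP : P = {z | ∀ i, u i z ≤ s i}) (hne : P.Nonempty)
    (Ibar : Set (Fin n)) (hIbar : Ibar = {i | ∀ z ∈ P, u i z = s i}) :
    intrinsicInterior ℝ P =
      {z | ∀ i ∉ Ibar, u i z < s i} ∩ ⋂ i ∈ Ibar, {z | u i z = s i} :=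
  stmt_1_general u s P hP Ibar hIbar
end

section
/- Let Z be a real normed space. If P_1 and P_2 are polyhedra in Z, then the Minkowski sum P_1 + P_2 and the intersection P_1 ∩ P_2 are polyhedra in Z. If P_1 and P_2 are generalized polyhedra in Z, then P_1 + P_2 and P_1 ∩ P_2 are generalized polyhedra in Z. -/
/-!
By Helly's theorem on the real line, a finite system of strict and non-strict affine inequalities
in one real unknown `r` is solvable iff each pair of its inequalities is, and a pair is solvable iff
the combination eliminating `r` holds (Fourier–Motzkin). Hence `P + ℝ ∙ w`, and by induction
`P + K` for a finite-dimensional subspace `K`, is again a (generalized) polyhedron.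
Both summands of a Minkowski sum are invariant under the common kernel `N` of their defining
functionals; for a finite-dimensional `K` with `K ⊔ N = ⊤` this gives
`P₁ + P₂ = {z | ∃ k ∈ K, k ∈ P₁ ∧ z - k ∈ P₂}`, a projection along `K` of a generalized polyhedron
in `Z × Z`.
-/

open Set Pointwise

/-- A polyhedron in a real normed space: a finite intersection of closed half-spaces. -/
def IsPolyhedron {Z : Type*} [NormedAddCommGroup Z] [NormedSpace ℝ Z] (P : Set Z) : Prop :=
  ∃ (n : ℕ) (u : Fin n → Z →L[ℝ] ℝ) (s : Fin n → ℝ), P = {z | ∀ i, u i z ≤ s i}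

/-- A generalized polyhedron in a real normed space: the intersection of a polyhedron
with finitely many open half-spaces. -/
def IsGeneralizedPolyhedron {Z : Type*} [NormedAddCommGroup Z] [NormedSpace ℝ Z]
    (P : Set Z) : Prop :=
  ∃ Q : Set Z, IsPolyhedron Q ∧
    ∃ (k : ℕ) (v : Fin k → Z →L[ℝ] ℝ) (t : Fin k → ℝ),
      P = Q ∩ {z | ∀ j, v j z < t j}

def IsNegHalfLine (C : Set ℝ) : Prop := C = Iic 0 ∨ C = Iio 0

namespace IsNegHalfLine

variable {C D : Set ℝ}

lemma convex (hC : IsNegHalfLine C) : Convex ℝ C := by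
  rcases hC with rfl | rfl
  exacts [convex_Iic 0, convex_Iio 0]

lemma inter (hC : IsNegHalfLine C) (hD : IsNegHalfLine D) : IsNegHalfLine (C ∩ D) := by
  rcases hC with rfl | rfl <;> rcases hD with rfl | rfl
  · exact .inl (inter_self _)
  · exact .inr (inter_eq_right.2 Iio_subset_Iic_self)
  · exact .inr (inter_eq_left.2 Iio_subset_Iic_self)
  · exact .inr (inter_self _)

lemma mem_of_le_neg_one (hC : IsNegHalfLine C) {x : ℝ} (hx : x ≤ -1) : x ∈ C := by
  rcases hC with rfl | rfl <;> simp only [mem_Iic, mem_Iio] <;> linarith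

lemma mul_mem (hC : IsNegHalfLine C) {c x : ℝ} (hc : 0 < c) (hx : x ∈ C) : c * x ∈ C := by
  rcases hC with rfl | rfl
  exacts [mul_nonpos_of_nonneg_of_nonpos hc.le hx, mul_neg_of_pos_of_neg hc hx]

lemma add_mem_inter (hC : IsNegHalfLine C) (hD : IsNegHalfLine D) {x y : ℝ} (hx : x ∈ C)
    (hy : y ∈ D) : x + y ∈ C ∩ D := by
  rcases hC with rfl | rfl <;> rcases hD with rfl | rfl <;>
    simp only [mem_inter_iff, mem_Iic, mem_Iio] at hx hy ⊢ <;> constructor <;> linarith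

lemma exists_add_mul_mem (hC : IsNegHalfLine C) (α : ℝ) {a : ℝ} (ha : a ≠ 0) :
    ∃ r, α + a * r ∈ C :=
  ⟨(-1 - α) / a, hC.mem_of_le_neg_one (by field_simp; linarith)⟩

end IsNegHalfLine

lemma exists_add_mul_le_neg_one (α β : ℝ) {a b : ℝ} (hab : 0 < a * b) :
    ∃ r, α + a * r ≤ -1 ∧ β + b * r ≤ -1 := by
  have ha : a ≠ 0 := left_ne_zero_of_mul hab.ne'
  have hb : b ≠ 0 := right_ne_zero_of_mul hab.ne'
  have hab' : 0 < a / b := div_pos_iff.2 (mul_pos_iff.1 hab)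
  have hba' : 0 < b / a := div_pos_iff.2 (mul_pos_iff.1 (by rwa [mul_comm]))
  refine ⟨-(1 + |α|) / a - (1 + |β|) / b, ?_, ?_⟩
  · have : a * (-(1 + |α|) / a - (1 + |β|) / b) = -(1 + |α|) - a / b * (1 + |β|) := by
      field_simp
    nlinarith [le_abs_self α, abs_nonneg β]
  · have : b * (-(1 + |α|) / a - (1 + |β|) / b) = -(1 + |β|) - b / a * (1 + |α|) := by
      field_simp; ring
    nlinarith [le_abs_self β, abs_nonneg α]

lemma abs_mul_add_abs_mul_eq_zero {a b : ℝ} (hab : a * b < 0) : |b| * a + |a| * b = 0 := by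
  rcases mul_neg_iff.1 hab with ⟨ha, hb⟩ | ⟨ha, hb⟩
  · rw [abs_of_pos ha, abs_of_neg hb]; ring
  · rw [abs_of_neg ha, abs_of_pos hb]; ring

lemma exists_add_mul_eq_div (α β : ℝ) {a b : ℝ} (hab : a * b < 0) :
    ∃ r, α + a * r = (|b| * α + |a| * β) / (2 * |b|) ∧
      β + b * r = (|b| * α + |a| * β) / (2 * |a|) := by
  have ha : a ≠ 0 := left_ne_zero_of_mul hab.ne
  have hb : b ≠ 0 := right_ne_zero_of_mul hab.ne
  have h0 := abs_mul_add_abs_mul_eq_zero hab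
  refine ⟨((|b| * α + |a| * β) / (2 * |b|) - α) / a, by field_simp; ring, ?_⟩
  have : |b| ≠ 0 := abs_ne_zero.2 hb
  have : |a| ≠ 0 := abs_ne_zero.2 ha
  field_simp
  linear_combination (|a| * β - |b| * α) * h0

lemma exists_add_mul_mem_and_add_mul_mem_iff {C D : Set ℝ} (hC : IsNegHalfLine C)
    (hD : IsNegHalfLine D) (α a β b : ℝ) :
    (∃ r, α + a * r ∈ C ∧ β + b * r ∈ D) ↔
      (a = 0 → α ∈ C) ∧ (b = 0 → β ∈ D) ∧ (a * b < 0 → |b| * α + |a| * β ∈ C ∩ D) := by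
  constructor
  · rintro ⟨r, hα, hβ⟩
    refine ⟨fun ha => by simpa [ha] using hα, fun hb => by simpa [hb] using hβ, fun hab => ?_⟩
    have hsum : |b| * α + |a| * β = |b| * (α + a * r) + |a| * (β + b * r) := by
      linear_combination -r * abs_mul_add_abs_mul_eq_zero hab
    rw [hsum]
    exact hC.add_mem_inter hD
      (hC.mul_mem (abs_pos.2 (right_ne_zero_of_mul hab.ne)) hα)
      (hD.mul_mem (abs_pos.2 (left_ne_zero_of_mul hab.ne)) hβ)
  · rintro ⟨hα, hβ, hαβ⟩
    rcases eq_or_ne a 0 with ha | ha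
    · rcases eq_or_ne b 0 with hb | hb
      · exact ⟨0, by simpa using hα ha, by simpa using hβ hb⟩
      · obtain ⟨r, hr⟩ := hD.exists_add_mul_mem β hb
        exact ⟨r, by simpa [ha] using hα ha, hr⟩
    rcases eq_or_ne b 0 with hb | hb
    · obtain ⟨r, hr⟩ := hC.exists_add_mul_mem α ha
      exact ⟨r, hr, by simpa [hb] using hβ hb⟩
    rcases (mul_ne_zero ha hb).lt_or_gt with hab | hab
    · obtain ⟨r, hrα, hrβ⟩ := exists_add_mul_eq_div α β hab
      have hx := hαβ hab
      refine ⟨r, ?_, ?_⟩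
      · rw [hrα, div_eq_inv_mul]
        exact hC.mul_mem (by positivity) hx.1
      · rw [hrβ, div_eq_inv_mul]
        exact hD.mul_mem (by positivity) hx.2
    · obtain ⟨r, hrα, hrβ⟩ := exists_add_mul_le_neg_one α β hab
      exact ⟨r, hC.mem_of_le_neg_one hrα, hD.mem_of_le_neg_one hrβ⟩

lemma Convex.iInter_nonempty_of_forall_inter_nonempty_real {ι : Type*} [Finite ι]
    {F : ι → Set ℝ} (hF : ∀ i, Convex ℝ (F i)) (h : ∀ i j, (F i ∩ F j).Nonempty) :
    (⋂ i, F i).Nonempty := by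
  classical
  have := Fintype.ofFinite ι
  have key := Convex.helly_theorem' (s := Finset.univ) (fun i _ => hF i) fun I _ hI => by
    rw [Module.finrank_self] at hI
    obtain hI | hI | hI : I.card = 0 ∨ I.card = 1 ∨ I.card = 2 := by omega
    · simp [Finset.card_eq_zero.1 hI]
    · obtain ⟨i, rfl⟩ := Finset.card_eq_one.1 hI
      simpa using h i i
    · obtain ⟨i, j, -, rfl⟩ := Finset.card_eq_two.1 hI
      simpa using h i j
  simpa using key

theorem exists_forall_add_mul_mem_iff {ι : Type*} [Finite ι] {C : ι → Set ℝ}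
    (hC : ∀ i, IsNegHalfLine (C i)) (α a : ι → ℝ) :
    (∃ r, ∀ i, α i + a i * r ∈ C i) ↔
      (∀ i, a i = 0 → α i ∈ C i) ∧
        ∀ i j, a i * a j < 0 → |a j| * α i + |a i| * α j ∈ C i ∩ C j := by
  constructor
  · rintro ⟨r, hr⟩
    refine ⟨fun i => ?_, fun i j => ?_⟩
    · exact ((exists_add_mul_mem_and_add_mul_mem_iff (hC i) (hC i) _ _ _ _).1 ⟨r, hr i, hr i⟩).1
    · exact ((exists_add_mul_mem_and_add_mul_mem_iff (hC i) (hC j) _ _ _ _).1 ⟨r, hr i, hr j⟩).2.2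
  · rintro ⟨h0, hneg⟩
    have hconv : ∀ i, Convex ℝ {r | α i + a i * r ∈ C i} := fun i =>
      ((hC i).convex.translate_preimage_right (α i)).linear_preimage (LinearMap.mulLeft ℝ (a i))
    simpa using Convex.iInter_nonempty_of_forall_inter_nonempty_real hconv fun i j =>
      (exists_add_mul_mem_and_add_mul_mem_iff (hC i) (hC j) _ _ _ _).2 ⟨h0 i, h0 j, hneg i j⟩

lemma Submodule.exists_fg_sup_ker_eq_top {𝕜 M V : Type*} [DivisionRing 𝕜] [AddCommGroup M]
    [Module 𝕜 M] [AddCommGroup V] [Module 𝕜 V] [FiniteDimensional 𝕜 V] (φ : M →ₗ[𝕜] V) :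
    ∃ K : Submodule 𝕜 M, K.FG ∧ K ⊔ LinearMap.ker φ = ⊤ := by
  obtain ⟨K, hK⟩ := (LinearMap.ker φ).exists_isCompl
  have : FiniteDimensional 𝕜 K :=
    (φ.quotKerEquivRange.symm.trans (Submodule.quotientEquivOfIsCompl _ _ hK)).finiteDimensional
  exact ⟨K, (Submodule.fg_iff_finiteDimensional K).2 this, hK.symm.sup_eq_top⟩

section

variable {E F : Type*} [NormedAddCommGroup E] [NormedSpace ℝ E]
  [NormedAddCommGroup F] [NormedSpace ℝ F]

lemma mem_add_span_singleton_iff {A : Set E} {w x : E} :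
    x ∈ A + (ℝ ∙ w : Set E) ↔ ∃ r : ℝ, x + r • w ∈ A := by
  simp only [mem_add, SetLike.mem_coe, Submodule.mem_span_singleton]
  constructor
  · rintro ⟨y, hy, _, ⟨r, rfl⟩, rfl⟩
    exact ⟨-r, by simpa⟩
  · rintro ⟨r, hr⟩
    exact ⟨_, hr, _, ⟨-r, rfl⟩, by simp⟩

theorem setOf_forall_sub_mem_add_span_singleton {ι : Type*} [Finite ι]
    (f : ι → E →L[ℝ] ℝ) (s : ι → ℝ) {C : ι → Set ℝ} (hC : ∀ i, IsNegHalfLine (C i)) (w : E) :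
    {x | ∀ i, f i x - s i ∈ C i} + (ℝ ∙ w : Set E) =
      {x | ∀ i : {i // f i w = 0}, f i x - s i ∈ C i} ∩
      {x | ∀ p : {p : ι × ι // f p.1 w * f p.2 w < 0},
        (|f p.1.2 w| • f p.1.1 + |f p.1.1 w| • f p.1.2) x -
          (|f p.1.2 w| * s p.1.1 + |f p.1.1 w| * s p.1.2) ∈ C p.1.1 ∩ C p.1.2} := by
  ext x
  have hmem : ∀ r : ℝ, x + r • w ∈ {x | ∀ i, f i x - s i ∈ C i} ↔
      ∀ i, (f i x - s i) + f i w * r ∈ C i := fun r => by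
    simp only [mem_ofPred_eq, map_add, map_smul, smul_eq_mul]
    exact forall_congr' fun i => by rw [add_sub_right_comm, mul_comm]
  simp only [mem_add_span_singleton_iff, hmem, exists_forall_add_mul_mem_iff hC, mem_inter_iff,
    mem_ofPred_eq, Subtype.forall, Prod.forall, add_apply, smul_apply, smul_eq_mul]
  refine and_congr Iff.rfl (forall₂_congr fun i j => imp_congr_right fun _ => ?_)
  ring_nf

lemma add_eq_setOf_exists_mem {P Q : Set E} {K N : Submodule ℝ E} (hKN : K ⊔ N = ⊤)
    (hP : ∀ x ∈ P, ∀ n ∈ N, x + n ∈ P) (hQ : ∀ y ∈ Q, ∀ n ∈ N, y + n ∈ Q) :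
    P + Q = {z | ∃ k ∈ K, k ∈ P ∧ z - k ∈ Q} := by
  ext z
  constructor
  · rintro ⟨x, hx, y, hy, rfl⟩
    obtain ⟨k, hk, n, hn, rfl⟩ := Submodule.mem_sup.1 (hKN ▸ Submodule.mem_top : x ∈ K ⊔ N)
    refine ⟨k, hk, by simpa using hP _ hx _ (N.neg_mem hn), ?_⟩
    rw [show k + n + y - k = y + n by abel]
    exact hQ _ hy _ hn
  · rintro ⟨k, -, hk, hzk⟩
    exact ⟨k, hk, z - k, hzk, add_sub_cancel k z⟩

/-- For `𝒞 = {Iic 0}` these are the polyhedra, for `𝒞 = {C | IsNegHalfLine C}` the generalized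
polyhedra. -/
def IsPolyhedralWith (𝒞 : Set (Set ℝ)) (P : Set E) : Prop :=
  ∃ (ι : Type) (_ : Finite ι) (f : ι → E →L[ℝ] ℝ) (s : ι → ℝ) (C : ι → Set ℝ),
    (∀ i, C i ∈ 𝒞) ∧ P = {x | ∀ i, f i x - s i ∈ C i}

-- Eliminating a variable merges constraints with sign conditions `C`, `D` into one with `C ∩ D`.
def IsSignClass (𝒞 : Set (Set ℝ)) : Prop :=
  (∀ C ∈ 𝒞, IsNegHalfLine C) ∧ ∀ C ∈ 𝒞, ∀ D ∈ 𝒞, C ∩ D ∈ 𝒞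

namespace IsPolyhedralWith

variable {𝒞 : Set (Set ℝ)} {P Q : Set E}

lemma setOf_forall {ι : Type} [Finite ι] (f : ι → E →L[ℝ] ℝ) (s : ι → ℝ) {C : ι → Set ℝ}
    (hC : ∀ i, C i ∈ 𝒞) : IsPolyhedralWith 𝒞 {x | ∀ i, f i x - s i ∈ C i} :=
  ⟨ι, inferInstance, f, s, C, hC, rfl⟩

lemma mono {𝒟 : Set (Set ℝ)} (h : 𝒞 ⊆ 𝒟) (hP : IsPolyhedralWith 𝒞 P) :
    IsPolyhedralWith 𝒟 P := by
  obtain ⟨ι, _, f, s, C, hC, rfl⟩ := hP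
  exact setOf_forall f s fun i => h (hC i)

lemma inter (hP : IsPolyhedralWith 𝒞 P) (hQ : IsPolyhedralWith 𝒞 Q) :
    IsPolyhedralWith 𝒞 (P ∩ Q) := by
  obtain ⟨ι, _, f, s, C, hC, rfl⟩ := hP
  obtain ⟨κ, _, g, t, D, hD, rfl⟩ := hQ
  convert setOf_forall (Sum.elim f g) (Sum.elim s t) (C := Sum.elim C D) (Sum.forall.2 ⟨hC, hD⟩)
  ext x
  simp [Sum.forall]

lemma preimage (hP : IsPolyhedralWith 𝒞 P) (g : F →L[ℝ] E) : IsPolyhedralWith 𝒞 (g ⁻¹' P) := by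
  obtain ⟨ι, _, f, s, C, hC, rfl⟩ := hP
  exact setOf_forall (fun i => f i ∘L g) s hC

lemma add_span_singleton (h𝒞 : IsSignClass 𝒞) (hP : IsPolyhedralWith 𝒞 P) (w : E) :
    IsPolyhedralWith 𝒞 (P + (ℝ ∙ w : Set E)) := by
  obtain ⟨ι, _, f, s, C, hC, rfl⟩ := hP
  rw [setOf_forall_sub_mem_add_span_singleton f s (fun i => h𝒞.1 _ (hC i))]
  exact .inter (setOf_forall _ _ fun i => hC i) (setOf_forall _ _ fun p => h𝒞.2 _ (hC _) _ (hC _))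

lemma add_submodule (h𝒞 : IsSignClass 𝒞) (hP : IsPolyhedralWith 𝒞 P) {K : Submodule ℝ E}
    (hK : K.FG) : IsPolyhedralWith 𝒞 (P + (K : Set E)) := by
  obtain ⟨T, rfl⟩ := hK
  classical
  induction T using Finset.induction_on generalizing P with
  | empty => simpa using hP
  | insert w T _ ih =>
    rw [Finset.coe_insert, Submodule.span_insert, Submodule.coe_sup, ← add_assoc]
    exact ih (hP.add_span_singleton h𝒞 w)

lemma setOf_exists_mem (h𝒞 : IsSignClass 𝒞) {S : Set (E × F)} (hS : IsPolyhedralWith 𝒞 S)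
    {K : Submodule ℝ F} (hK : K.FG) : IsPolyhedralWith 𝒞 {x | ∃ k ∈ K, (x, k) ∈ S} := by
  have hproj : {x | ∃ k ∈ K, (x, k) ∈ S} =
      ContinuousLinearMap.inl ℝ E F ⁻¹' (S + (K.map (LinearMap.inr ℝ E F) : Set (E × F))) := by
    ext x
    simp only [mem_ofPred_eq, mem_preimage, mem_add, SetLike.mem_coe, Submodule.mem_map]
    constructor
    · rintro ⟨k, hk, hxk⟩
      exact ⟨(x, k), hxk, _, ⟨-k, K.neg_mem hk, rfl⟩, by simp⟩
    · rintro ⟨⟨y, k⟩, hyk, _, ⟨l, hl, rfl⟩, h⟩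
      simp only [ContinuousLinearMap.inl_apply, LinearMap.inr_apply, Prod.mk_add_mk, add_zero,
        Prod.mk.injEq] at h
      obtain ⟨rfl, hkl⟩ := h
      rw [← neg_eq_of_add_eq_zero_left hkl] at hyk
      exact ⟨-l, K.neg_mem hl, hyk⟩
  rw [hproj]
  exact (hS.add_submodule h𝒞 (hK.map _)).preimage _

theorem add (h𝒞 : IsSignClass 𝒞) (hP : IsPolyhedralWith 𝒞 P) (hQ : IsPolyhedralWith 𝒞 Q) :
    IsPolyhedralWith 𝒞 (P + Q) := by
  obtain ⟨ι, _, f, s, C, hC, rfl⟩ := hP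
  obtain ⟨κ, _, g, t, D, hD, rfl⟩ := hQ
  let φ : E →ₗ[ℝ] ι ⊕ κ → ℝ := LinearMap.pi (Sum.elim (fun i => f i) fun j => g j)
  obtain ⟨K, hK, hKN⟩ := Submodule.exists_fg_sup_ker_eq_top φ
  have hker : ∀ n ∈ LinearMap.ker φ, (∀ i, f i n = 0) ∧ ∀ j, g j n = 0 := fun n hn =>
    ⟨fun i => congr_fun hn (.inl i), fun j => congr_fun hn (.inr j)⟩
  rw [add_eq_setOf_exists_mem hKN
    (fun x hx n hn => by intro i; simpa [(hker n hn).1 i] using hx i)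
    (fun y hy n hn => by intro j; simpa [(hker n hn).2 j] using hy j)]
  exact setOf_exists_mem h𝒞 (((setOf_forall f s hC).preimage (.snd ℝ E E)).inter
    ((setOf_forall g t hD).preimage (.fst ℝ E E - .snd ℝ E E))) hK

end IsPolyhedralWith

lemma isSignClass_singleton_Iic : IsSignClass {Iic (0 : ℝ)} :=
  ⟨fun _ hC => .inl hC, by rintro _ rfl _ rfl; exact inter_self _⟩

lemma isSignClass_setOf_isNegHalfLine : IsSignClass {C | IsNegHalfLine C} :=
  ⟨fun _ hC => hC, fun _ hC _ hD => hC.inter hD⟩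

theorem isPolyhedron_iff_isPolyhedralWith {P : Set E} :
    IsPolyhedron P ↔ IsPolyhedralWith {Iic 0} P := by
  constructor
  · rintro ⟨n, u, s, rfl⟩
    convert IsPolyhedralWith.setOf_forall u s fun _ => mem_singleton (Iic (0 : ℝ)) using 1
    simp
  · rintro ⟨ι, _, f, s, C, hC, rfl⟩
    obtain rfl : C = fun _ => Iic 0 := funext hC
    let e := Finite.equivFin ι
    refine ⟨_, fun j => f (e.symm j), fun j => s (e.symm j), ?_⟩
    ext x
    simp only [mem_ofPred_eq, mem_Iic, sub_nonpos]
    exact e.forall_congr_left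

theorem isGeneralizedPolyhedron_iff_isPolyhedralWith {P : Set E} :
    IsGeneralizedPolyhedron P ↔ IsPolyhedralWith {C | IsNegHalfLine C} P := by
  constructor
  · rintro ⟨Q, hQ, k, v, t, rfl⟩
    refine ((isPolyhedron_iff_isPolyhedralWith.1 hQ).mono ?_).inter ?_
    · exact isSignClass_singleton_Iic.1
    · convert IsPolyhedralWith.setOf_forall (𝒞 := {C | IsNegHalfLine C}) (C := fun _ => Iio 0)
        v t fun _ => .inr rfl using 1
      simp [sub_neg]
  · rintro ⟨ι, _, f, s, C, hC, rfl⟩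
    let e := Finite.equivFin {i // C i = Iio 0}
    refine ⟨{x | ∀ i : {i // C i = Iic 0}, f i x - s i ∈ C i},
      isPolyhedron_iff_isPolyhedralWith.2 (.setOf_forall _ _ fun i => i.2),
      _, fun j => f (e.symm j), fun j => s (e.symm j), ?_⟩
    ext x
    simp only [mem_inter_iff, mem_ofPred_eq]
    rw [← e.forall_congr_left (p := fun i : {i // C i = Iio 0} => f i x < s i)]
    constructor
    · intro h
      exact ⟨fun i => h i, fun i => by simpa [i.2] using h i⟩
    · rintro ⟨hIic, hIio⟩ i
      rcases hC i with hi | hi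
      · exact hIic ⟨i, hi⟩
      · simpa [hi] using hIio ⟨i, hi⟩

end

/-- Minkowski sums and intersections of (generalized) polyhedra are
(generalized) polyhedra. -/
theorem stmt_3 {Z : Type*} [NormedAddCommGroup Z] [NormedSpace ℝ Z] (P1 P2 : Set Z) :
    (IsPolyhedron P1 → IsPolyhedron P2 →
      IsPolyhedron (P1 + P2) ∧ IsPolyhedron (P1 ∩ P2)) ∧
    (IsGeneralizedPolyhedron P1 → IsGeneralizedPolyhedron P2 →
      IsGeneralizedPolyhedron (P1 + P2) ∧ IsGeneralizedPolyhedron (P1 ∩ P2)) := by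
  simp only [isPolyhedron_iff_isPolyhedralWith, isGeneralizedPolyhedron_iff_isPolyhedralWith]
  exact ⟨fun h1 h2 => ⟨h1.add isSignClass_singleton_Iic h2, h1.inter h2⟩,
    fun h1 h2 => ⟨h1.add isSignClass_setOf_isNegHalfLine h2, h1.inter h2⟩⟩
end

section
/- Let Z be a real normed space, P a polyhedron in Z, and F_1, …, F_ν (ν ≥ 1) exposed faces of P. If C is a convex subset of Z with C ⊆ ⋃_{j=1}^ν F_j, then there exists j_0 ∈ {1,…,ν} such that C ⊆ F_{j_0}. -/
open Set

/-- `F` is an exposed face of `P`: the set of maximizers over `P` of some continuous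
linear functional. -/
def IsExposedFace {Z : Type*} [NormedAddCommGroup Z] [NormedSpace ℝ Z]
    (P F : Set Z) : Prop :=
  ∃ l : Z →L[ℝ] ℝ, F = {u ∈ P | ∀ v ∈ P, l v ≤ l u}

/-!
Exposed faces are extreme subsets, and a union of extreme subsets is again extreme, so by
induction on the number of faces it suffices to treat two extreme subsets `B₁`, `B₂`. If a convex
`C ⊆ B₁ ∪ B₂` lies in neither, pick `x₁ ∈ C \ B₁` and `x₂ ∈ C \ B₂`: then `x₁ ∈ B₂`, `x₂ ∈ B₁`, and
their midpoint lies in `C`, hence in some `Bᵢ`; extremality of `Bᵢ` puts both endpoints in `Bᵢ`,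
a contradiction.
-/

section

variable {𝕜 E ι : Type*}

section SMul

variable [Semiring 𝕜] [PartialOrder 𝕜] [AddCommMonoid E] [SMul 𝕜 E] {A : Set E}

theorem isExtreme_iUnion {κ : Sort*} {F : κ → Set E} (hF : ∀ i, IsExtreme 𝕜 A (F i)) :
    IsExtreme 𝕜 A (⋃ i, F i) where
  subset := iUnion_subset fun i => (hF i).subset
  left_mem_of_mem_openSegment _ hx _ hy _ hz hxyz := by
    obtain ⟨i, hzi⟩ := mem_iUnion.mp hz
    exact mem_iUnion.mpr ⟨i, (hF i).left_mem_of_mem_openSegment hx hy hzi hxyz⟩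

theorem isExtreme_biUnion {s : Set ι} {F : ι → Set E} (hF : ∀ i ∈ s, IsExtreme 𝕜 A (F i)) :
    IsExtreme 𝕜 A (⋃ i ∈ s, F i) :=
  isExtreme_iUnion fun i => isExtreme_iUnion fun hi => hF i hi

end SMul

variable [Field 𝕜] [LinearOrder 𝕜] [IsStrictOrderedRing 𝕜] [AddCommGroup E] [Module 𝕜 E]
  {A B₁ B₂ C : Set E}

theorem Convex.subset_or_subset_of_subset_union_of_isExtreme (hC : Convex 𝕜 C)
    (hB₁ : IsExtreme 𝕜 A B₁) (hB₂ : IsExtreme 𝕜 A B₂) (hCB : C ⊆ B₁ ∪ B₂) :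
    C ⊆ B₁ ∨ C ⊆ B₂ := by
  by_contra! h
  obtain ⟨⟨x₁, hx₁C, hx₁B₁⟩, ⟨x₂, hx₂C, hx₂B₂⟩⟩ := And.imp not_subset.mp not_subset.mp h
  have hx₁B₂ : x₁ ∈ B₂ := (hCB hx₁C).resolve_left hx₁B₁
  have hx₂B₁ : x₂ ∈ B₁ := (hCB hx₂C).resolve_right hx₂B₂
  have hx₁A := hB₂.subset hx₁B₂
  have hx₂A := hB₁.subset hx₂B₁
  set m : E := (2⁻¹ : 𝕜) • x₁ + (2⁻¹ : 𝕜) • x₂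
  have hm : m ∈ openSegment 𝕜 x₁ x₂ := ⟨2⁻¹, 2⁻¹, by positivity, by positivity, by norm_num, rfl⟩
  rcases hCB (hC.openSegment_subset hx₁C hx₂C hm) with hmB₁ | hmB₂
  · exact hx₁B₁ (hB₁.left_mem_of_mem_openSegment hx₁A hx₂A hmB₁ hm)
  · exact hx₂B₂ (hB₂.right_mem_of_mem_openSegment hx₁A hx₂A hmB₂ hm)

theorem Convex.exists_subset_of_subset_biUnion_of_isExtreme {s : Finset ι} (hs : s.Nonempty)
    {F : ι → Set E} (hC : Convex 𝕜 C) (hF : ∀ i ∈ s, IsExtreme 𝕜 A (F i))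
    (hCF : C ⊆ ⋃ i ∈ s, F i) : ∃ i ∈ s, C ⊆ F i := by
  classical
  induction hs using Finset.Nonempty.cons_induction with
  | singleton a => exact ⟨a, Finset.mem_singleton_self a, by simpa using hCF⟩
  | cons a s ha hs ih =>
    simp only [Finset.forall_mem_cons] at hF
    rw [Finset.cons_eq_insert, Finset.set_biUnion_insert] at hCF
    rcases hC.subset_or_subset_of_subset_union_of_isExtreme hF.1 (isExtreme_biUnion hF.2) hCF
      with haF | hsF
    · exact ⟨a, Finset.mem_cons_self a s, haF⟩
    · obtain ⟨i, hi, hiF⟩ := ih hF.2 hsF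
      exact ⟨i, Finset.mem_cons.mpr (Or.inr hi), hiF⟩

end

theorem IsExposedFace.isExposed {Z : Type*} [NormedAddCommGroup Z] [NormedSpace ℝ Z]
    {P F : Set Z} (h : IsExposedFace P F) : IsExposed ℝ P F :=
  fun _ => h

theorem stmt_5_general {Z : Type*} [NormedAddCommGroup Z] [NormedSpace ℝ Z]
    (P : Set Z)
    {ν : ℕ} (hν : 0 < ν) (F : Fin ν → Set Z) (hF : ∀ j, IsExposedFace P (F j))
    (C : Set Z) (hC : Convex ℝ C) (hsub : C ⊆ ⋃ j, F j) :
    ∃ j0 : Fin ν, C ⊆ F j0 := by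
  have : Nonempty (Fin ν) := ⟨⟨0, hν⟩⟩
  obtain ⟨j, -, hj⟩ := hC.exists_subset_of_subset_biUnion_of_isExtreme Finset.univ_nonempty
    (fun j _ => (hF j).isExposed.isExtreme) (by simpa using hsub)
  exact ⟨j, hj⟩

/-- A convex set covered by finitely many exposed faces of a polyhedron is
contained in one of them. -/
theorem stmt_5 {Z : Type*} [NormedAddCommGroup Z] [NormedSpace ℝ Z]
    (P : Set Z) (hP : IsPolyhedron P)
    {ν : ℕ} (hν : 0 < ν) (F : Fin ν → Set Z) (hF : ∀ j, IsExposedFace P (F j))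
    (C : Set Z) (hC : Convex ℝ C) (hsub : C ⊆ ⋃ j, F j) :
    ∃ j0 : Fin ν, C ⊆ F j0 :=
  stmt_5_general P hν F hF C hC hsub
end

section
/- Let P_1, …, P_m be polyhedra in a real normed space Z such that int(P_i) ≠ ∅ for every i = 1,…,m. Then there exist finitely many polyhedra Q_1, …, Q_ν in Z with int(Q_j) ≠ ∅ for every j, such that ⋃_{i=1}^m P_i = ⋃_{j=1}^ν Q_j and Q_{j'} ∩ int(Q_j) = ∅ for all j, j' ∈ {1,…,ν} with j ≠ j'. -/
/-!
Collect the hyperplanes bounding the `P i` into one finite arrangement `H`, after discarding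
the vacuous constraints `0 ≤ c`. Its chambers, one for each choice of a side of every hyperplane,
are polyhedra, and a point in the interior of one chamber lies strictly off every hyperplane,
hence in no other chamber. A chamber whose interior meets `P i` lies inside `P i`. Conversely,
by convexity every point of `P i` is a limit of interior points of `P i` lying off all
hyperplanes, and each such point is interior to a chamber; as the union of those chambers is
closed, they cover `P i`.
-/

open Set

section Normed

variable {Z : Type*} [NormedAddCommGroup Z] [NormedSpace ℝ Z]

theorem isPolyhedron_setOf_forall_le {ι : Type*} [Finite ι] (u : ι → Z →L[ℝ] ℝ) (s : ι → ℝ) :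
    IsPolyhedron {z | ∀ i, u i z ≤ s i} := by
  have := Fintype.ofFinite ι
  let e := Fintype.equivFin ι
  refine ⟨Fintype.card ι, fun j => u (e.symm j), fun j => s (e.symm j), ?_⟩
  ext z
  exact ⟨fun h j => h _, fun h i => by simpa using h (e i)⟩

theorem IsPolyhedron.inter {P Q : Set Z} (hP : IsPolyhedron P) (hQ : IsPolyhedron Q) :
    IsPolyhedron (P ∩ Q) := by
  obtain ⟨n, u, s, rfl⟩ := hP
  obtain ⟨n', u', s', rfl⟩ := hQ
  convert isPolyhedron_setOf_forall_le (Sum.elim u u') (Sum.elim s s') using 1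
  ext z
  simp [Sum.forall]

theorem IsPolyhedron.convex {P : Set Z} (hP : IsPolyhedron P) : Convex ℝ P := by
  obtain ⟨n, u, s, rfl⟩ := hP
  rw [ofPred_forall]
  exact convex_iInter fun i => convex_halfSpace_le (u i).isLinear (s i)

theorem IsPolyhedron.exists_finset_ne_zero {P : Set Z} (hP : IsPolyhedron P) (hne : P.Nonempty) :
    ∃ F : Finset ((Z →L[ℝ] ℝ) × ℝ), (∀ p ∈ F, p.1 ≠ 0) ∧ P = {z | ∀ p ∈ F, p.1 z ≤ p.2} := by
  classical
  obtain ⟨n, u, s, rfl⟩ := hP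
  obtain ⟨x, hx⟩ := hne
  refine ⟨(Finset.univ.image fun i => (u i, s i)).filter (·.1 ≠ 0), by simp, ?_⟩
  ext z
  simp only [Finset.mem_filter, Finset.mem_image, Finset.mem_univ, true_and, mem_ofPred_eq]
  constructor
  · rintro h _ ⟨⟨i, rfl⟩, -⟩
    exact h i
  · intro h i
    by_cases hu : u i = 0
    · simpa [hu] using hx i
    · exact h _ ⟨⟨i, rfl⟩, hu⟩

end Normed

theorem dense_biInter_finset_of_isOpen {X ι : Type*} [TopologicalSpace X] {s : Finset ι}
    {f : ι → Set X} (ho : ∀ i ∈ s, IsOpen (f i)) (hd : ∀ i ∈ s, Dense (f i)) :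
    Dense (⋂ i ∈ s, f i) := by
  classical
  induction s using Finset.induction_on with
  | empty => simp
  | insert i s _ ih =>
    simp only [Finset.mem_insert, forall_eq_or_imp] at ho hd
    rw [Finset.set_biInter_insert]
    exact hd.1.inter_of_isOpen_left (ih ho.2 hd.2) ho.1

namespace ContinuousLinearMap

variable {Z : Type*} [AddCommGroup Z] [TopologicalSpace Z] [IsTopologicalAddGroup Z]
  [Module ℝ Z] [ContinuousSMul ℝ Z] {f : Z →L[ℝ] ℝ}

theorem interior_preimage_of_ne_zero (hf : f ≠ 0) (S : Set ℝ) :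
    interior (f ⁻¹' S) = f ⁻¹' interior S :=
  ((f.isOpenMap_of_ne_zero hf).preimage_interior_eq_interior_preimage f.continuous S).symm

theorem interior_setOf_le (hf : f ≠ 0) (c : ℝ) : interior {z | f z ≤ c} = {z | f z < c} := by
  have h := f.interior_preimage_of_ne_zero hf (Iic c)
  rwa [interior_Iic] at h

theorem interior_setOf_ge (hf : f ≠ 0) (c : ℝ) : interior {z | c ≤ f z} = {z | c < f z} := by
  have h := f.interior_preimage_of_ne_zero hf (Ici c)
  rwa [interior_Ici] at h

theorem dense_setOf_ne (hf : f ≠ 0) (c : ℝ) : Dense {z | f z ≠ c} := by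
  have h : interior (f ⁻¹' {c}) = ∅ := by
    rw [f.interior_preimage_of_ne_zero hf, interior_singleton, preimage_empty]
  exact interior_eq_empty_iff_dense_compl.1 h

end ContinuousLinearMap

section Chamber

variable {Z : Type*} [AddCommGroup Z] [TopologicalSpace Z] [Module ℝ Z]

/-- A pair `p = (f, c)` stands for the hyperplane `f = c`. The chamber of the arrangement `H`
indexed by `T ⊆ H` lies on the side `f ≤ c` of the hyperplanes in `T` and on the side `c ≤ f`
of the others. -/
def chamber (H T : Finset ((Z →L[ℝ] ℝ) × ℝ)) : Set Z :=
  {z | (∀ p ∈ T, p.1 z ≤ p.2) ∧ ∀ p ∈ H, p ∉ T → p.2 ≤ p.1 z}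

def openChamber (H T : Finset ((Z →L[ℝ] ℝ) × ℝ)) : Set Z :=
  {z | (∀ p ∈ T, p.1 z < p.2) ∧ ∀ p ∈ H, p ∉ T → p.2 < p.1 z}

variable {H T : Finset ((Z →L[ℝ] ℝ) × ℝ)} {z : Z}

theorem isClosed_chamber : IsClosed (chamber H T) := by
  simp only [chamber, ofPred_and, ofPred_forall]
  exact .inter (isClosed_biInter fun p _ => isClosed_le p.1.continuous continuous_const)
    (isClosed_biInter fun p _ =>
      isClosed_iInter fun _ => isClosed_le continuous_const p.1.continuous)

theorem isOpen_openChamber : IsOpen (openChamber H T) := by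
  simp only [openChamber, ofPred_and, ofPred_forall]
  exact .inter (isOpen_biInter_finset fun p _ => isOpen_lt p.1.continuous continuous_const)
    (isOpen_biInter_finset fun p _ =>
      isOpen_iInter_of_finite fun _ => isOpen_lt continuous_const p.1.continuous)

theorem openChamber_subset_chamber : openChamber H T ⊆ chamber H T :=
  fun _ hz => ⟨fun p hp => (hz.1 p hp).le, fun p hp hpT => (hz.2 p hp hpT).le⟩

theorem openChamber_subset_interior_chamber : openChamber H T ⊆ interior (chamber H T) :=
  interior_maximal openChamber_subset_chamber isOpen_openChamber

theorem mem_openChamber_filter_lt (hz : ∀ p ∈ H, p.1 z ≠ p.2) :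
    z ∈ openChamber H (H.filter fun p => p.1 z < p.2) := by
  refine ⟨fun p hp => (Finset.mem_filter.1 hp).2, fun p hp hpT => ?_⟩
  have : ¬ p.1 z < p.2 := fun h => hpT (Finset.mem_filter.2 ⟨hp, h⟩)
  exact lt_of_le_of_ne (not_lt.1 this) (hz p hp).symm

end Chamber

section InteriorChamber

variable {Z : Type*} [AddCommGroup Z] [TopologicalSpace Z] [IsTopologicalAddGroup Z]
  [Module ℝ Z] [ContinuousSMul ℝ Z] {H T T' : Finset ((Z →L[ℝ] ℝ) × ℝ)} {z : Z}

theorem apply_lt_of_mem_interior_chamber {p : (Z →L[ℝ] ℝ) × ℝ} (hp : p ∈ T) (hp0 : p.1 ≠ 0)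
    (hz : z ∈ interior (chamber H T)) : p.1 z < p.2 := by
  have h := interior_mono (t := {z | p.1 z ≤ p.2}) (fun z hz => hz.1 p hp) hz
  rwa [p.1.interior_setOf_le hp0] at h

theorem lt_apply_of_mem_interior_chamber {p : (Z →L[ℝ] ℝ) × ℝ} (hp : p ∈ H) (hpT : p ∉ T)
    (hp0 : p.1 ≠ 0) (hz : z ∈ interior (chamber H T)) : p.2 < p.1 z := by
  have h := interior_mono (t := {z | p.2 ≤ p.1 z}) (fun z hz => hz.2 p hp hpT) hz
  rwa [p.1.interior_setOf_ge hp0] at h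

theorem chamber_inter_interior_chamber_eq_empty (hH : ∀ p ∈ H, p.1 ≠ 0) (hT : T ⊆ H)
    (hT' : T' ⊆ H) (hne : T ≠ T') : chamber H T' ∩ interior (chamber H T) = ∅ := by
  obtain ⟨p, hpT, hpT'⟩ | ⟨p, hpT', hpT⟩ : (∃ p ∈ T, p ∉ T') ∨ ∃ p ∈ T', p ∉ T := by
    by_contra! h
    exact hne (Finset.Subset.antisymm h.1 h.2)
  · refine eq_empty_iff_forall_notMem.2 fun z ⟨hz', hz⟩ => ?_
    have := apply_lt_of_mem_interior_chamber hpT (hH p (hT hpT)) hz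
    linarith [hz'.2 p (hT hpT) hpT']
  · refine eq_empty_iff_forall_notMem.2 fun z ⟨hz', hz⟩ => ?_
    have := lt_apply_of_mem_interior_chamber (hT' hpT') hpT (hH p (hT' hpT')) hz
    linarith [hz'.1 p hpT']

theorem chamber_subset_of_interior_inter_nonempty (hH : ∀ p ∈ H, p.1 ≠ 0)
    {F : Finset ((Z →L[ℝ] ℝ) × ℝ)} (hF : F ⊆ H)
    (hne : (interior (chamber H T) ∩ {z | ∀ p ∈ F, p.1 z ≤ p.2}).Nonempty) :
    chamber H T ⊆ {z | ∀ p ∈ F, p.1 z ≤ p.2} := by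
  obtain ⟨x, hx, hxF⟩ := hne
  intro z hz p hp
  by_cases hpT : p ∈ T
  · exact hz.1 p hpT
  · have := lt_apply_of_mem_interior_chamber (hF hp) hpT (hH p (hF hp)) hx
    linarith [hxF p hp]

theorem exists_chamber_of_mem_closure_interior (hH : ∀ p ∈ H, p.1 ≠ 0) {A : Set Z}
    (hz : z ∈ closure (interior A)) :
    ∃ T ⊆ H, (interior (chamber H T) ∩ A).Nonempty ∧ z ∈ chamber H T := by
  classical
  set 𝒯 := H.powerset.filter fun T => (interior (chamber H T) ∩ A).Nonempty
  let D : Set Z := ⋂ p ∈ H, {x | p.1 x ≠ p.2}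
  have hD : Dense D := dense_biInter_finset_of_isOpen
    (fun p _ => isOpen_ne_fun p.1.continuous continuous_const)
    (fun p hp => p.1.dense_setOf_ne (hH p hp) p.2)
  have hcover : interior A ∩ D ⊆ ⋃ T ∈ 𝒯, chamber H T := by
    rintro x ⟨hxA, hxD⟩
    have hx := mem_openChamber_filter_lt (H := H) (by simpa [D] using hxD)
    refine mem_biUnion (Finset.mem_filter.2 ⟨Finset.mem_powerset.2 (Finset.filter_subset _ _),
      x, openChamber_subset_interior_chamber hx, interior_subset hxA⟩) ?_
    exact openChamber_subset_chamber hx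
  have hclosed : IsClosed (⋃ T ∈ 𝒯, chamber H T) :=
    isClosed_biUnion_finset fun _ _ => isClosed_chamber
  have hsub : closure (interior A) ⊆ ⋃ T ∈ 𝒯, chamber H T :=
    calc closure (interior A)
        ⊆ closure (interior A ∩ D) :=
          closure_minimal (hD.open_subset_closure_inter isOpen_interior) isClosed_closure
      _ ⊆ closure (⋃ T ∈ 𝒯, chamber H T) := closure_mono hcover
      _ = ⋃ T ∈ 𝒯, chamber H T := hclosed.closure_eq
  obtain ⟨T, hT, hzT⟩ := mem_iUnion₂.1 (hsub hz)
  obtain ⟨hTH, hTA⟩ := Finset.mem_filter.1 hT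
  exact ⟨T, Finset.mem_powerset.1 hTH, hTA, hzT⟩

theorem iUnion_eq_biUnion_chamber (hH : ∀ p ∈ H, p.1 ≠ 0) {ι : Type*} {P : ι → Set Z}
    {F : ι → Finset ((Z →L[ℝ] ℝ) × ℝ)} (hPF : ∀ i, P i = {z | ∀ p ∈ F i, p.1 z ≤ p.2})
    (hFH : ∀ i, F i ⊆ H) (hconv : ∀ i, Convex ℝ (P i)) (hint : ∀ i, (interior (P i)).Nonempty)
    {𝒯 : Set (Finset ((Z →L[ℝ] ℝ) × ℝ))}
    (h𝒯 : ∀ T, T ∈ 𝒯 ↔ T ⊆ H ∧ ∃ i, (interior (chamber H T) ∩ P i).Nonempty) :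
    ⋃ i, P i = ⋃ T ∈ 𝒯, chamber H T := by
  refine Subset.antisymm (iUnion_subset fun i z hz => ?_) (iUnion₂_subset fun T hT => ?_)
  · have hzcl : z ∈ closure (interior (P i)) := by
      rw [(hconv i).closure_interior_eq_closure_of_nonempty_interior (hint i)]
      exact subset_closure hz
    obtain ⟨T, hTH, hTP, hzT⟩ := exists_chamber_of_mem_closure_interior hH hzcl
    exact mem_biUnion ((h𝒯 T).2 ⟨hTH, i, hTP⟩) hzT
  · obtain ⟨-, i, hTP⟩ := (h𝒯 T).1 hT
    rw [hPF i] at hTP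
    exact (hPF i ▸ chamber_subset_of_interior_inter_nonempty hH (hFH i) hTP).trans
      (subset_iUnion P i)

end InteriorChamber

theorem isPolyhedron_chamber {Z : Type*} [NormedAddCommGroup Z] [NormedSpace ℝ Z]
    (H T : Finset ((Z →L[ℝ] ℝ) × ℝ)) : IsPolyhedron (chamber H T) := by
  classical
  convert (isPolyhedron_setOf_forall_le (fun p : T => p.1.1) (fun p => p.1.2)).inter
    (isPolyhedron_setOf_forall_le (fun p : ↥(H \ T) => -p.1.1) (fun p => -p.1.2)) using 1
  ext z
  simp [chamber, Finset.mem_sdiff]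

/-- A finite union of polyhedra with nonempty interiors can be rewritten as
a finite union of polyhedra with nonempty interiors that do not overlap (each one misses
the interiors of the others). -/
theorem stmt_6 {Z : Type*} [NormedAddCommGroup Z] [NormedSpace ℝ Z]
    {m : ℕ} (P : Fin m → Set Z)
    (hpoly : ∀ i, IsPolyhedron (P i))
    (hint : ∀ i, (interior (P i)).Nonempty) :
    ∃ (ν : ℕ) (Q : Fin ν → Set Z),
      (∀ j, IsPolyhedron (Q j)) ∧
      (∀ j, (interior (Q j)).Nonempty) ∧
      (⋃ i, P i) = (⋃ j, Q j) ∧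
      ∀ j j', j ≠ j' → Q j' ∩ interior (Q j) = ∅ := by
  classical
  choose F hF0 hPF using fun i => (hpoly i).exists_finset_ne_zero ((hint i).mono interior_subset)
  set H := Finset.univ.biUnion F
  have hFH : ∀ i, F i ⊆ H := fun i => Finset.subset_biUnion_of_mem F (Finset.mem_univ i)
  have hH : ∀ p ∈ H, p.1 ≠ 0 := fun p hp => by
    obtain ⟨i, -, hpi⟩ := Finset.mem_biUnion.1 hp
    exact hF0 i p hpi
  set 𝒯 := H.powerset.filter fun T => ∃ i, (interior (chamber H T) ∩ P i).Nonempty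
  have mem_𝒯 : ∀ T, T ∈ 𝒯 ↔ T ⊆ H ∧ ∃ i, (interior (chamber H T) ∩ P i).Nonempty := by
    simp [𝒯]
  let e := 𝒯.equivFin.symm
  refine ⟨𝒯.card, fun j => chamber H (e j), fun j => isPolyhedron_chamber _ _, fun j => ?_, ?_,
    fun j j' hjj' => ?_⟩
  · obtain ⟨i, x, hx, -⟩ := ((mem_𝒯 _).1 (e j).2).2
    exact ⟨x, hx⟩
  · rw [iUnion_eq_biUnion_chamber hH hPF hFH (fun i => (hpoly i).convex) hint (𝒯 := ↑𝒯)
      (by simpa using mem_𝒯), biUnion_eq_iUnion]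
    exact (e.surjective.iUnion_comp fun T => chamber H T).symm
  · exact chamber_inter_interior_chamber_eq_empty hH ((mem_𝒯 _).1 (e j).2).1
      ((mem_𝒯 _).1 (e j').2).1 (fun h => hjj' (e.injective (Subtype.ext h)))
end

section
/- Let {(u_1^*, s_1), …, (u_n^*, s_n)} be a prime generator group of a polyhedron P in a real normed space Z, and suppose int(P) ≠ ∅. If j_1, j_2 ∈ {1,…,n} with j_1 ≠ j_2 and there exists x̄ ∈ P with ⟨u_{j_1}^*, x̄⟩ = s_{j_1} and ⟨u_{j_2}^*, x̄⟩ = s_{j_2}, then u_{j_1}^* and u_{j_2}^* are linearly independent. -/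
/-! Suppose `u j₂ = c • u j₁`; both constraints are active at `xbar`, so `s j₂ = c * s j₁`.
If `c ≥ 0`, constraint `j₂` follows from constraint `j₁`, contradicting primeness.
If `c < 0`, the two constraints together force `u j₁ = s j₁` on `P`, so `P` lies in a hyperplane
and has empty interior. The same redundancy argument (with `c = 0`) shows `u j₁ ≠ 0`. -/

open Set

theorem ContinuousLinearMap.interior_setOf_apply_eq_eq_empty {𝕜 M : Type*}
    [NontriviallyNormedField 𝕜] [AddCommGroup M] [TopologicalSpace M] [ContinuousAdd M]
    [Module 𝕜 M] [ContinuousSMul 𝕜 M] {f : StrongDual 𝕜 M} (hf : f ≠ 0) (c : 𝕜) :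
    interior {z | f z = c} = ∅ := by
  refine subset_empty_iff.mp fun z hz => ?_
  have := (f.isOpenMap_of_ne_zero hf).interior_preimage_subset_preimage_interior
    (s := {c}) hz
  simp [interior_singleton] at this

theorem setOf_forall_le_eq_of_eq_nonneg_smul {ι α : Type*} {u : ι → α → ℝ} {s : ι → ℝ}
    {j k : ι} (hjk : j ≠ k) {c : ℝ} (hc : 0 ≤ c) (hu : ∀ z, u k z = c * u j z)
    (hs : s k = c * s j) :
    {z | ∀ i, u i z ≤ s i} = {z | ∀ i, i ≠ k → u i z ≤ s i} := by
  refine Subset.antisymm (fun z hz i _ => hz i) fun z hz i => ?_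
  obtain rfl | hik := eq_or_ne i k
  · rw [hu, hs]
    exact mul_le_mul_of_nonneg_left (hz j hjk) hc
  · exact hz i hik

theorem stmt_7_general {Z : Type*} [NormedAddCommGroup Z] [NormedSpace ℝ Z]
    {n : ℕ} (u : Fin n → Z →L[ℝ] ℝ) (s : Fin n → ℝ) (P : Set Z)
    (hP : P = {z | ∀ i, u i z ≤ s i})
    (hprime : ∀ j, P ≠ {z | ∀ i, i ≠ j → u i z ≤ s i})
    (hint : (interior P).Nonempty)
    (j1 j2 : Fin n) (hj : j1 ≠ j2) (xbar : Z)
    (h1 : u j1 xbar = s j1) (h2 : u j2 xbar = s j2) :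
    LinearIndependent ℝ ![u j1, u j2] := by
  subst hP
  have hu1 : u j1 ≠ 0 := fun h0 => hprime j1 <|
    setOf_forall_le_eq_of_eq_nonneg_smul hj.symm le_rfl (by simp [h0])
      (by simp [← h1, h0])
  refine (LinearIndependent.pair_iff' hu1).mpr fun c hc => ?_
  have hu : ∀ z, u j2 z = c * u j1 z := fun z => by simp [← hc]
  have hs : s j2 = c * s j1 := by rw [← h1, ← h2, hu]
  rcases le_or_gt 0 c with hc0 | hc0
  · exact hprime j2 (setOf_forall_le_eq_of_eq_nonneg_smul hj hc0 hu hs)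
  · have hsub : {z | ∀ i, u i z ≤ s i} ⊆ {z | u j1 z = s j1} := fun z hz => by
      have := hz j2
      rw [hu, hs] at this
      exact le_antisymm (hz j1) ((mul_le_mul_left_of_neg hc0).mp this)
    have := (interior_mono hsub).trans_eq
      (ContinuousLinearMap.interior_setOf_apply_eq_eq_empty hu1 (s j1))
    exact hint.ne_empty (subset_empty_iff.mp this)

/-- For a prime generator group of a polyhedron with nonempty interior,
two generators active at a common point are linearly independent. -/
theorem stmt_7 {Z : Type*} [NormedAddCommGroup Z] [NormedSpace ℝ Z]
    {n : ℕ} (u : Fin n → Z →L[ℝ] ℝ) (s : Fin n → ℝ) (P : Set Z)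
    (hP : P = {z | ∀ i, u i z ≤ s i})
    (hprime : ∀ j, P ≠ {z | ∀ i, i ≠ j → u i z ≤ s i})
    (hproper : P ≠ Set.univ)
    (hint : (interior P).Nonempty)
    (j1 j2 : Fin n) (hj : j1 ≠ j2) (xbar : Z) (hxbar : xbar ∈ P)
    (h1 : u j1 xbar = s j1) (h2 : u j2 xbar = s j2) :
    LinearIndependent ℝ ![u j1, u j2] :=
  stmt_7_general u s P hP hprime hint j1 j2 hj xbar h1 h2
end

section
/- Let {(u_1^*, s_1), …, (u_n^*, s_n)} be a prime generator group of a polyhedron P in a real normed space Z, with P nonempty and P ≠ Z. For each j ∈ {1,…,n}, set F_j(P) = P ∩ {x ∈ Z : ⟨u_j^*, x⟩ = s_j} and F_j°(P) = {z ∈ Z : ⟨u_j^*, z⟩ = s_j and ⟨u_i^*, z⟩ < s_i for all i ∈ {1,…,n} with i ≠ j}. Then the following are equivalent: (i) int(P) ≠ ∅; (ii) F_j(P) = cl(F_j°(P)) for all j ∈ {1,…,n}; (iii) F_j°(P) ≠ ∅ for all j ∈ {1,…,n}; (iv) F_{j_0}°(P) ≠ ∅ for some j_0 ∈ {1,…,n}.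 -/
/-!
Irredundancy of the `j`-th inequality yields a point `q` violating that inequality only; in
particular `u j ≠ 0`. Nonzero functionals are open maps, so `int P` is the set where all
inequalities are strict, and `{u j ≤ s j}` is the closure of `{u j < s j}`. From a point `p` of
`int P` the segment `[p, q]` meets the hyperplane `u j = s j` inside `F_j°`. Conversely, a point of
`F_j°` is a limit of points of `{u j < s j}`, and those close to it satisfy the other inequalities
strictly, hence lie in `int P`. Finally, the open segment from a point of `F_j` to a point of
`F_j°` lies in `F_j°`, so `F_j ⊆ cl F_j°`.
-/

open Set AffineMap

section LineMap

variable {k : Type*} [Field k] [LinearOrder k] [IsStrictOrderedRing k] {a b c t : k}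

theorem lineMap_lt_of_lt_of_le (ha : a < c) (hb : b ≤ c) (ht₀ : 0 ≤ t) (ht₁ : t < 1) :
    lineMap a b t < c :=
  calc lineMap a b t < lineMap c b t := lineMap_strict_mono_left ha ht₁
    _ ≤ lineMap c c t := lineMap_mono_right hb ht₀
    _ = c := lineMap_same_apply c t

theorem lineMap_lt_of_le_of_lt (ha : a ≤ c) (hb : b < c) (ht₀ : 0 < t) (ht₁ : t ≤ 1) :
    lineMap a b t < c :=
  calc lineMap a b t ≤ lineMap c b t := lineMap_mono_left ha ht₁
    _ < lineMap c c t := lineMap_strict_mono_right hb ht₀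
    _ = c := lineMap_same_apply c t

theorem lineMap_le_of_le_of_le (ha : a ≤ c) (hb : b ≤ c) (ht₀ : 0 ≤ t) (ht₁ : t ≤ 1) :
    lineMap a b t ≤ c :=
  calc lineMap a b t ≤ lineMap c b t := lineMap_mono_left ha ht₁
    _ ≤ lineMap c c t := lineMap_mono_right hb ht₀
    _ = c := lineMap_same_apply c t

theorem exists_lineMap_eq_of_le_of_lt (ha : a ≤ c) (hb : c < b) :
    ∃ t ∈ Ico (0 : k) 1, lineMap a b t = c := by
  have hab : 0 < b - a := by linarith
  refine ⟨(c - a) / (b - a),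
    ⟨div_nonneg (by linarith) hab.le, (div_lt_one hab).2 (by linarith)⟩, ?_⟩
  rw [lineMap_apply_ring', div_mul_cancel₀ _ hab.ne']
  ring

end LineMap

section HalfSpace

variable {E : Type*} [AddCommGroup E] [Module ℝ E] [TopologicalSpace E] [ContinuousAdd E]
  [ContinuousSMul ℝ E] {f : E →L[ℝ] ℝ}

theorem ContinuousLinearMap.interior_preimage_Iic (hf : f ≠ 0) (c : ℝ) :
    interior (f ⁻¹' Iic c) = f ⁻¹' Iio c := by
  rw [← (f.isOpenMap_of_ne_zero hf).preimage_interior_eq_interior_preimage f.continuous,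
    interior_Iic]

theorem ContinuousLinearMap.closure_preimage_Iio (hf : f ≠ 0) (c : ℝ) :
    closure (f ⁻¹' Iio c) = f ⁻¹' Iic c := by
  rw [← (f.isOpenMap_of_ne_zero hf).preimage_closure_eq_closure_preimage f.continuous,
    closure_Iio]

end HalfSpace

section Polyhedron

variable {E ι : Type*} [AddCommGroup E] [Module ℝ E] [TopologicalSpace E]
  (u : ι → E →L[ℝ] ℝ) (s : ι → ℝ)

def polyhedron : Set E := {z | ∀ i, u i z ≤ s i}

def facet (j : ι) : Set E := polyhedron u s ∩ {x | u j x = s j}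

def openFacet (j : ι) : Set E := {z | u j z = s j ∧ ∀ i, i ≠ j → u i z < s i}

variable {u s}

theorem polyhedron_eq_iInter : polyhedron u s = ⋂ i, u i ⁻¹' Iic (s i) := by
  ext; simp [polyhedron]

theorem polyhedron_eq_univ [IsEmpty ι] : polyhedron u s = univ := by
  simp [polyhedron_eq_iInter]

theorem isClosed_facet (j : ι) : IsClosed (facet u s j) := by
  rw [facet, polyhedron_eq_iInter]
  exact (isClosed_iInter fun i => isClosed_Iic.preimage (u i).continuous).inter
    (isClosed_eq (u j).continuous continuous_const)

theorem openFacet_subset_facet (j : ι) : openFacet u s j ⊆ facet u s j := by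
  rintro z ⟨hzj, hz⟩
  refine ⟨fun i => ?_, hzj⟩
  rcases eq_or_ne i j with rfl | hij
  exacts [hzj.le, (hz i hij).le]

theorem exists_lt_of_polyhedron_ne {j : ι}
    (hj : polyhedron u s ≠ {z | ∀ i, i ≠ j → u i z ≤ s i}) :
    ∃ q, (∀ i, i ≠ j → u i q ≤ s i) ∧ s j < u j q := by
  by_contra! h
  refine hj (Subset.antisymm (fun z hz i _ => hz i) fun z hz i => ?_)
  rcases eq_or_ne i j with rfl | hij
  exacts [h z hz, hz i hij]

theorem ne_zero_of_polyhedron_ne {j : ι} (hne : (polyhedron u s).Nonempty)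
    (hj : polyhedron u s ≠ {z | ∀ i, i ≠ j → u i z ≤ s i}) : u j ≠ 0 := by
  obtain ⟨p, hp⟩ := hne
  obtain ⟨q, -, hq⟩ := exists_lt_of_polyhedron_ne hj
  intro h
  have hpj := hp j
  rw [h, zero_apply] at hpj hq
  exact hpj.not_gt hq

theorem ContinuousLinearMap.map_lineMap (f : E →L[ℝ] ℝ) (p q : E) (t : ℝ) :
    f (lineMap p q t) = lineMap (f p) (f q) t :=
  (f : E →ₗ[ℝ] ℝ).toAffineMap.apply_lineMap p q t

theorem ContinuousLinearMap.exists_lineMap_eq_of_le_of_lt (f : E →L[ℝ] ℝ) {p q : E} {c : ℝ}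
    (hp : f p ≤ c) (hq : c < f q) : ∃ t ∈ Ico (0 : ℝ) 1, f (lineMap p q t) = c := by
  simpa only [f.map_lineMap] using _root_.exists_lineMap_eq_of_le_of_lt hp hq

theorem facet_nonempty {j : ι} (hne : (polyhedron u s).Nonempty)
    (hj : polyhedron u s ≠ {z | ∀ i, i ≠ j → u i z ≤ s i}) : (facet u s j).Nonempty := by
  obtain ⟨p, hp⟩ := hne
  obtain ⟨q, hq⟩ := exists_lt_of_polyhedron_ne hj
  obtain ⟨t, ⟨ht₀, ht₁⟩, htj⟩ := (u j).exists_lineMap_eq_of_le_of_lt (hp j) hq.2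
  refine ⟨lineMap p q t, fun i => ?_, htj⟩
  rcases eq_or_ne i j with rfl | hij
  · exact htj.le
  · rw [ContinuousLinearMap.map_lineMap]
    exact lineMap_le_of_le_of_le (hp i) (hq.1 i hij) ht₀ ht₁.le

theorem openFacet_nonempty {j : ι} {p : E} (hp : ∀ i, u i p < s i)
    (hj : polyhedron u s ≠ {z | ∀ i, i ≠ j → u i z ≤ s i}) :
    (openFacet u s j).Nonempty := by
  obtain ⟨q, hq⟩ := exists_lt_of_polyhedron_ne hj
  obtain ⟨t, ⟨ht₀, ht₁⟩, htj⟩ := (u j).exists_lineMap_eq_of_le_of_lt (hp j).le hq.2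
  refine ⟨lineMap p q t, htj, fun i hij => ?_⟩
  rw [ContinuousLinearMap.map_lineMap]
  exact lineMap_lt_of_lt_of_le (hp i) (hq.1 i hij) ht₀ ht₁

theorem openSegment_subset_openFacet {j : ι} {x z : E} (hx : x ∈ facet u s j)
    (hz : z ∈ openFacet u s j) : openSegment ℝ x z ⊆ openFacet u s j := by
  rw [openSegment_eq_image_lineMap]
  rintro _ ⟨t, ⟨ht₀, ht₁⟩, rfl⟩
  simp only [openFacet, mem_ofPred_eq, ContinuousLinearMap.map_lineMap]
  refine ⟨by rw [hx.2, hz.1, lineMap_same_apply], fun i hij => ?_⟩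
  exact lineMap_lt_of_le_of_lt (hx.1 i) (hz.2 i hij) ht₀ ht₁.le

section Topology

variable [ContinuousAdd E] [ContinuousSMul ℝ E]

theorem facet_eq_closure_openFacet {j : ι} (hne : (openFacet u s j).Nonempty) :
    facet u s j = closure (openFacet u s j) := by
  obtain ⟨z, hz⟩ := hne
  refine Subset.antisymm (fun x hx => ?_)
    (closure_minimal (openFacet_subset_facet j) (isClosed_facet j))
  exact closure_mono (openSegment_subset_openFacet hx hz)
    (segment_subset_closure_openSegment (left_mem_segment ℝ x z))

theorem interior_polyhedron [Finite ι] (hu : ∀ i, u i ≠ 0) :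
    interior (polyhedron u s) = {z | ∀ i, u i z < s i} := by
  rw [polyhedron_eq_iInter, interior_iInter_of_finite]
  simp_rw [ContinuousLinearMap.interior_preimage_Iic (hu _)]
  ext; simp

theorem exists_forall_lt_of_openFacet_nonempty [Finite ι] {j : ι} (hj : u j ≠ 0)
    (hne : (openFacet u s j).Nonempty) : ∃ y, ∀ i, u i y < s i := by
  obtain ⟨z, hzj, hz⟩ := hne
  have hopen : IsOpen {y | ∀ i, i ≠ j → u i y < s i} := by
    simp only [ofPred_forall]
    exact isOpen_iInter_of_finite fun i => isOpen_iInter_of_finite fun _ =>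
      isOpen_lt (u i).continuous continuous_const
  have hzcl : z ∈ closure (u j ⁻¹' Iio (s j)) := by
    rw [ContinuousLinearMap.closure_preimage_Iio hj]
    exact hzj.le
  obtain ⟨y, hy, hyj⟩ := mem_closure_iff.1 hzcl _ hopen hz
  refine ⟨y, fun i => ?_⟩
  rcases eq_or_ne i j with rfl | hij
  exacts [hyj, hy i hij]

end Topology

end Polyhedron

/-- For a prime generator group of a nonempty proper polyhedron `P`,
the following are equivalent: (i) `int P ≠ ∅`; (ii) `F_j(P) = cl (F_j°(P))` for all `j`;
(iii) `F_j°(P) ≠ ∅` for all `j`; (iv) `F_{j₀}°(P) ≠ ∅` for some `j₀`. -/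
theorem stmt_8 {Z : Type*} [NormedAddCommGroup Z] [NormedSpace ℝ Z]
    {n : ℕ} (u : Fin n → Z →L[ℝ] ℝ) (s : Fin n → ℝ) (P : Set Z)
    (hP : P = {z | ∀ i, u i z ≤ s i})
    (hprime : ∀ j, P ≠ {z | ∀ i, i ≠ j → u i z ≤ s i})
    (hne : P.Nonempty) (hproper : P ≠ Set.univ)
    (F Fo : Fin n → Set Z)
    (hF : ∀ j, F j = P ∩ {x | u j x = s j})
    (hFo : ∀ j, Fo j = {z | u j z = s j ∧ ∀ i, i ≠ j → u i z < s i}) :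
    ((interior P).Nonempty ↔ ∀ j, F j = closure (Fo j)) ∧
    ((interior P).Nonempty ↔ ∀ j, (Fo j).Nonempty) ∧
    ((interior P).Nonempty ↔ ∃ j0, (Fo j0).Nonempty) := by
  change P = polyhedron u s at hP
  subst hP
  obtain rfl : F = facet u s := funext hF
  obtain rfl : Fo = openFacet u s := funext hFo
  have hu : ∀ j, u j ≠ 0 := fun j => ne_zero_of_polyhedron_ne hne (hprime j)
  have : Nonempty (Fin n) := not_isEmpty_iff.1 fun _ => hproper polyhedron_eq_univ
  rw [interior_polyhedron hu]
  suffices h : [{z | ∀ i, u i z < s i}.Nonempty, ∀ j, facet u s j = closure (openFacet u s j),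
      ∀ j, (openFacet u s j).Nonempty, ∃ j, (openFacet u s j).Nonempty].TFAE from
    ⟨h.out 0 1, h.out 0 2, h.out 0 3⟩
  tfae_have 1 → 3 := fun ⟨p, hp⟩ j => openFacet_nonempty hp (hprime j)
  tfae_have 3 → 2 := fun h j => facet_eq_closure_openFacet (h j)
  tfae_have 2 → 3 := fun h j => closure_nonempty_iff.1 (h j ▸ facet_nonempty hne (hprime j))
  tfae_have 3 → 4 := fun h => ⟨Classical.arbitrary _, h _⟩
  tfae_have 4 → 1 := fun ⟨j, hj⟩ => exists_forall_lt_of_openFacet_nonempty (hu j) hj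
  tfae_finish
end

section
/- Let X and Y be real normed spaces, f : X → Y, and let P_1, …, P_m be polyhedra in X, T_1, …, T_m : X → Y continuous linear operators and b_1, …, b_m ∈ Y such that X = ⋃_{i=1}^m P_i, int(P_i) ≠ ∅ for every i, P_i ∩ int(P_j) = ∅ for all i ≠ j, and f(x) = T_i x + b_i for all x ∈ P_i and each i. Define lin(P_i) = {h ∈ X : P_i + ℝh ⊆ P_i} and X_f = ⋂_{i=1}^m lin(P_i). Then X_f is a closed linear subspace of X of finite codimension, and T_1 x = T_2 x = ⋯ = T_m x for every x ∈ X_f. -/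
open Set

/-!
On each piece `f` is affine with linear part `Tᵢ`, and translating a point of `Pᵢ` by a vector
`h ∈ X_f` keeps it in `Pᵢ`; hence `Tᵢ h = f (x + h) - f x` for every `x ∈ Pᵢ`. So `Tᵢ h = Tⱼ h`
whenever `Pᵢ` and `Pⱼ` meet, and since the closed pieces cover the connected space `X`, the value
`Tᵢ h` cannot change from piece to piece. For the subspace part: the lineality space of a nonempty
polyhedron `{z | uₖ z ≤ sₖ}` is `⋂ₖ ker uₖ`, so `X_f` is the kernel of finitely many continuous
functionals.
-/

section Lineality

variable {E : Type*} [AddCommGroup E] [Module ℝ E]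

def lineality (K : Set E) : Set E := {h | ∀ x ∈ K, ∀ t : ℝ, x + t • h ∈ K}

theorem add_mem_of_mem_lineality {K : Set E} {h x : E} (hh : h ∈ lineality K) (hx : x ∈ K) :
    x + h ∈ K := by
  simpa using hh x hx 1

theorem sub_eq_of_mem_lineality {F : Type*} [AddCommGroup F] [Module ℝ F] {K : Set E} {f : E → F}
    (T : E →ₗ[ℝ] F) {b : F} (hf : ∀ x ∈ K, f x = T x + b) {h x : E} (hh : h ∈ lineality K)
    (hx : x ∈ K) : f (x + h) - f x = T h := by
  rw [hf _ (add_mem_of_mem_lineality hh hx), hf x hx, map_add]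
  abel

theorem mem_lineality_setOf_forall_le_iff {ι : Type*} (u : ι → E →ₗ[ℝ] ℝ) (s : ι → ℝ)
    (hne : {z | ∀ k, u k z ≤ s k}.Nonempty) {h : E} :
    h ∈ lineality {z | ∀ k, u k z ≤ s k} ↔ ∀ k, u k h = 0 := by
  constructor
  · intro hh k
    obtain ⟨x, hx⟩ := hne
    by_contra hk
    -- moving far enough along `h` pushes `u k` above the bound `s k`
    have := hh x hx ((s k - u k x + 1) / u k h) k
    rw [map_add, map_smul, smul_eq_mul, div_mul_cancel₀ _ hk] at this
    linarith
  · intro hh x hx t k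
    simpa [hh k] using hx k

end Lineality

section Polyhedron

variable {Z : Type*} [NormedAddCommGroup Z] [NormedSpace ℝ Z]

theorem IsPolyhedron.isClosed {P : Set Z} (hP : IsPolyhedron P) : IsClosed P := by
  obtain ⟨n, u, s, rfl⟩ := hP
  simp only [ofPred_forall]
  exact isClosed_iInter fun k => isClosed_le (u k).continuous continuous_const

theorem IsPolyhedron.exists_lineality_eq {P : Set Z} (hP : IsPolyhedron P) (hne : P.Nonempty) :
    ∃ (n : ℕ) (u : Fin n → Z →L[ℝ] ℝ), lineality P = {h | ∀ k, u k h = 0} := by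
  obtain ⟨n, u, s, rfl⟩ := hP
  exact ⟨n, u, Set.ext fun h =>
    mem_lineality_setOf_forall_le_iff (fun k => (u k : Z →ₗ[ℝ] ℝ)) s hne⟩

theorem IsPolyhedron.exists_submodule_eq_iInter_lineality {ι : Type*} [Finite ι]
    {P : ι → Set Z} (hP : ∀ i, IsPolyhedron (P i)) (hne : ∀ i, (P i).Nonempty) :
    ∃ S : Submodule ℝ Z, (S : Set Z) = ⋂ i, lineality (P i) ∧ IsClosed (S : Set Z) ∧
      FiniteDimensional ℝ (Z ⧸ S) := by
  choose n u hu using fun i => (hP i).exists_lineality_eq (hne i)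
  let Φ : Z →L[ℝ] ((Σ i, Fin (n i)) → ℝ) := ContinuousLinearMap.pi fun k => u k.1 k.2
  refine ⟨_, ?_, Φ.isClosed_ker, Submodule.CoFG.ker _⟩
  ext h
  simp [Φ, hu, funext_iff, Sigma.forall]

end Polyhedron

theorem eq_of_compatible_on_closed_cover {X ι α : Type*} [TopologicalSpace X]
    [PreconnectedSpace X] [Finite ι] {P : ι → Set X} (hclosed : ∀ i, IsClosed (P i))
    (hcover : ⋃ i, P i = univ) (g : ι → α) (hcompat : ∀ i j, (P i ∩ P j).Nonempty → g i = g j)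
    {i j : ι} (hi : (P i).Nonempty) (hj : (P j).Nonempty) : g i = g j := by
  set A := ⋃ k ∈ {k | g k = g i}, P k
  have hAc : Aᶜ = ⋃ k ∈ {k | g k ≠ g i}, P k := by
    ext x
    obtain ⟨k, hxk⟩ := mem_iUnion.mp (hcover.symm ▸ mem_univ x : x ∈ ⋃ k, P k)
    simp only [A, mem_compl_iff, mem_iUnion, mem_ofPred_eq, exists_prop, not_exists, not_and]
    refine ⟨fun hx => ⟨k, fun hk => hx k hk hxk, hxk⟩, ?_⟩
    rintro ⟨l, hl, hxl⟩ k' hk' hxk'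
    exact hl ((hcompat l k' ⟨x, hxl, hxk'⟩).trans hk')
  have hA : IsClopen A :=
    ⟨Set.Finite.isClosed_biUnion (toFinite _) fun k _ => hclosed k,
      isClosed_compl_iff.mp (hAc ▸ Set.Finite.isClosed_biUnion (toFinite _) fun k _ => hclosed k)⟩
  obtain ⟨y, hy⟩ := hj
  have hyA : y ∈ A := hA.eq_univ (hi.mono fun x hx => mem_biUnion rfl hx) ▸ mem_univ y
  obtain ⟨k, hk, hyk⟩ := mem_iUnion₂.mp hyA
  exact ((hcompat j k ⟨y, hy, hyk⟩).trans hk).symm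

theorem stmt_13_general {X Y : Type*} [NormedAddCommGroup X] [NormedSpace ℝ X]
    [NormedAddCommGroup Y] [NormedSpace ℝ Y]
    (f : X → Y) {m : ℕ}
    (P : Fin m → Set X) (T : Fin m → X →L[ℝ] Y) (b : Fin m → Y)
    (hpoly : ∀ i, IsPolyhedron (P i)) (hcover : (⋃ i, P i) = Set.univ)
    (hint : ∀ i, (interior (P i)).Nonempty)
    (hf : ∀ i, ∀ x ∈ P i, f x = T i x + b i)
    (Xf : Set X)
    (hXf : Xf = ⋂ i, {h | ∀ x ∈ P i, ∀ t : ℝ, x + t • h ∈ P i}) :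
    (∃ S : Submodule ℝ X, (S : Set X) = Xf ∧ IsClosed (S : Set X) ∧
        FiniteDimensional ℝ (X ⧸ S)) ∧
      ∀ x ∈ Xf, ∀ i j, T i x = T j x := by
  have hXf' : Xf = ⋂ i, lineality (P i) := hXf
  have hne : ∀ i, (P i).Nonempty := fun i => (hint i).mono interior_subset
  refine ⟨hXf' ▸ IsPolyhedron.exists_submodule_eq_iInter_lineality hpoly hne, ?_⟩
  intro h hh i j
  rw [hXf', mem_iInter] at hh
  refine eq_of_compatible_on_closed_cover (fun k => (hpoly k).isClosed) hcover (fun k => T k h)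
    ?_ (hne i) (hne j)
  rintro k l ⟨x, hxk, hxl⟩
  calc T k h = f (x + h) - f x :=
        (sub_eq_of_mem_lineality (T k : X →ₗ[ℝ] Y) (hf k) (hh k) hxk).symm
    _ = T l h := sub_eq_of_mem_lineality (T l : X →ₗ[ℝ] Y) (hf l) (hh l) hxl

/-- For a piecewise linear `f` represented on a polyhedral cover with
nonempty interiors and non-overlapping pieces, the set
`X_f = ⋂ᵢ lin(Pᵢ)` (intersection of the linearity spaces) is a closed linear subspace
of finite codimension on which all the linear parts `Tᵢ` coincide. -/
theorem stmt_13 {X Y : Type*} [NormedAddCommGroup X] [NormedSpace ℝ X]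
    [NormedAddCommGroup Y] [NormedSpace ℝ Y]
    (f : X → Y) {m : ℕ}
    (P : Fin m → Set X) (T : Fin m → X →L[ℝ] Y) (b : Fin m → Y)
    (hpoly : ∀ i, IsPolyhedron (P i)) (hcover : (⋃ i, P i) = Set.univ)
    (hint : ∀ i, (interior (P i)).Nonempty)
    (hdisj : ∀ i j, i ≠ j → P i ∩ interior (P j) = ∅)
    (hf : ∀ i, ∀ x ∈ P i, f x = T i x + b i)
    (Xf : Set X)
    (hXf : Xf = ⋂ i, {h | ∀ x ∈ P i, ∀ t : ℝ, x + t • h ∈ P i}) :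
    (∃ S : Submodule ℝ X, (S : Set X) = Xf ∧ IsClosed (S : Set X) ∧
        FiniteDimensional ℝ (X ⧸ S)) ∧
      ∀ x ∈ Xf, ∀ i j, T i x = T j x :=
  stmt_13_general f P T b hpoly hcover hint hf Xf hXf
end

section
/- Let Y be a real normed space, Y_1 a closed linear subspace of Y, and Z a finite-dimensional linear subspace of Y with Y_1 ∩ Z = {0}. Let Π_Z : Y_1 + Z → Z be the projection defined by Π_Z(y + z) = z for (y, z) ∈ Y_1 × Z. Let C be a convex cone in Y such that (Y_1 + Z) ∩ int(C) ≠ ∅, and set C_Z = Π_Z((Y_1 + Z) ∩ C). Then the interior of C_Z in the normed space Z equals Π_Z((Y_1 + Z) ∩ int(C)). -/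
open Set Pointwise Topology

/-!
Write `B = Π_Z ((Y₁ + Z) ∩ int C)`; it is an open subset of `C_Z`, so `B ⊆ int C_Z`.
Conversely, given `z ∈ int C_Z` and any `w ∈ B`, push `z` slightly beyond itself away from `w`
to a point `x ∈ C_Z`. Then `z` lies in the open segment `(w, x)`, and by convexity the
corresponding combination of lifts lies in `int C`, so `z ∈ B`.
-/

section OpenSegment

variable {F : Type*} [AddCommGroup F] [Module ℝ F] [TopologicalSpace F]
  [IsTopologicalAddGroup F] [ContinuousSMul ℝ F]

open AffineMap in
theorem exists_mem_openSegment_of_mem_interior {A : Set F} {z : F} (hz : z ∈ interior A)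
    (w : F) : ∃ x ∈ A, z ∈ openSegment ℝ w x := by
  have hline : Filter.Tendsto (lineMap w z : ℝ → F) (𝓝[>] 1) (𝓝 z) := by
    simpa using ((lineMap_continuous (R := ℝ) (p := w) (q := z)).tendsto 1).mono_left
      nhdsWithin_le_nhds
  obtain ⟨t, hxA, ht : 1 < t⟩ :=
    ((hline.eventually (mem_interior_iff_mem_nhds.mp hz)).and self_mem_nhdsWithin).exists
  refine ⟨lineMap w z t, hxA, ?_⟩
  have hsplit : lineMap w (lineMap w z t) t⁻¹ = z := by
    rw [lineMap_lineMap_right, inv_mul_cancel₀ (by positivity), lineMap_apply_one]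
  simpa only [hsplit] using
    lineMap_mem_openSegment ℝ w (lineMap w z t) ⟨by positivity, inv_lt_one_of_one_lt₀ ht⟩

theorem interior_eq_of_openSegment_subset {A B : Set F} (hBA : B ⊆ A) (hB : IsOpen B)
    (hBne : B.Nonempty) (hseg : ∀ w ∈ B, ∀ x ∈ A, openSegment ℝ w x ⊆ B) :
    interior A = B := by
  refine Subset.antisymm (fun z hz => ?_) (interior_maximal hBA hB)
  obtain ⟨w, hw⟩ := hBne
  obtain ⟨x, hxA, hzx⟩ := exists_mem_openSegment_of_mem_interior hz w
  exact hseg w hw x hxA hzx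

end OpenSegment

/-- For a subspace `S` with `S ⊓ Z = ⊥` this is `Π_Z ((S + Z) ∩ C)`, where `Π_Z` projects
`S + Z` onto `Z` along `S`. -/
def projAlong {E : Type*} [AddCommGroup E] [Module ℝ E] (S : Set E) (Z : Submodule ℝ E)
    (C : Set E) : Set Z :=
  {z : Z | ∃ y ∈ S, y + (z : E) ∈ C}

section ProjAlong

variable {E : Type*} [AddCommGroup E] [Module ℝ E] {S : Set E} {Z : Submodule ℝ E}

theorem projAlong_mono {C D : Set E} (h : C ⊆ D) : projAlong S Z C ⊆ projAlong S Z D :=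
  fun _ ⟨y, hy, hyC⟩ => ⟨y, hy, h hyC⟩

variable [TopologicalSpace E]

theorem isOpen_projAlong [ContinuousAdd E] {U : Set E} (hU : IsOpen U) :
    IsOpen (projAlong S Z U) := by
  refine isOpen_iff_forall_mem_open.mpr fun z ⟨y, hy, hyz⟩ => ?_
  refine ⟨{z' : Z | y + (z' : E) ∈ U}, fun z' hz' => ⟨y, hy, hz'⟩, ?_, hyz⟩
  exact hU.preimage (by fun_prop)

theorem openSegment_subset_projAlong_interior [IsTopologicalAddGroup E]
    [ContinuousConstSMul ℝ E] {C : Set E} (hS : Convex ℝ S)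
    (hC : Convex ℝ C) {w x : Z} (hw : w ∈ projAlong S Z (interior C))
    (hx : x ∈ projAlong S Z C) : openSegment ℝ w x ⊆ projAlong S Z (interior C) := by
  obtain ⟨y₀, hy₀, hw⟩ := hw
  obtain ⟨y₁, hy₁, hx⟩ := hx
  rintro _ ⟨a, b, ha, hb, hab, rfl⟩
  refine ⟨a • y₀ + b • y₁, hS hy₀ hy₁ ha.le hb.le hab, ?_⟩
  have hlift : a • y₀ + b • y₁ + ((a • w + b • x : Z) : E) = a • (y₀ + w) + b • (y₁ + x) := by
    push_cast
    module
  rw [hlift]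
  exact hC.openSegment_interior_self_subset_interior hw hx ⟨a, b, ha, hb, hab, rfl⟩

end ProjAlong

theorem stmt_15_general {Y : Type*} [NormedAddCommGroup Y] [NormedSpace ℝ Y]
    (Y1 Z : Submodule ℝ Y)
    (C : Set Y) (hCconv : Convex ℝ C)
    (hne : (((Y1 : Set Y) + (Z : Set Y)) ∩ interior C).Nonempty)
    (CZ : Set Z) (hCZ : CZ = {z : Z | ∃ y ∈ Y1, y + (z : Y) ∈ C}) :
    interior CZ = {z : Z | ∃ y ∈ Y1, y + (z : Y) ∈ interior C} := by
  subst hCZ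
  obtain ⟨_, ⟨y₀, hy₀, z₀, hz₀, rfl⟩, hint⟩ := hne
  exact interior_eq_of_openSegment_subset (projAlong_mono interior_subset)
    (isOpen_projAlong isOpen_interior) ⟨⟨z₀, hz₀⟩, y₀, hy₀, hint⟩
    fun _ hw _ hx => openSegment_subset_projAlong_interior Y1.convex hCconv hw hx

/-- `int_Z (C_Z) = Π_Z ((Y₁ ⊕ Z) ∩ int C)`, where
`C_Z = Π_Z ((Y₁ ⊕ Z) ∩ C)` and `Π_Z` projects `Y₁ ⊕ Z` onto `Z`.
Here `C_Z` is expressed inside the subtype `Z`, so that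
`C_Z = {z : Z | ∃ y ∈ Y₁, y + z ∈ C}` and similarly for the image of `int C`. -/
theorem stmt_15 {Y : Type*} [NormedAddCommGroup Y] [NormedSpace ℝ Y]
    (Y1 Z : Submodule ℝ Y) (hY1closed : IsClosed (Y1 : Set Y))
    (hZfin : FiniteDimensional ℝ Z) (hinf : Y1 ⊓ Z = ⊥)
    (C : Set Y) (hCconv : Convex ℝ C)
    (hCcone : ∀ t : ℝ, 0 ≤ t → t • C ⊆ C)
    (hne : (((Y1 : Set Y) + (Z : Set Y)) ∩ interior C).Nonempty)
    (CZ : Set Z) (hCZ : CZ = {z : Z | ∃ y ∈ Y1, y + (z : Y) ∈ C}) :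
    interior CZ = {z : Z | ∃ y ∈ Y1, y + (z : Y) ∈ interior C} :=
  stmt_15_general Y1 Z C hCconv hne CZ hCZ
end

section
/- Let Y be a real normed space, Y_1 and Z linear subspaces of Y with Y_1 ∩ Z = {0}, and let Π_Z : Y_1 + Z → Z be the projection Π_Z(y + z) = z for (y, z) ∈ Y_1 × Z. Let C be a convex cone in Y with 0 ∈ C, and set C_Z = Π_Z((Y_1 + Z) ∩ C). Let B ⊆ Z, y_1 ∈ Y_1, y_2 ∈ B. Then: (a) if y_1 + y_2 ∈ E(Y_1 + B, C), then y_2 ∈ E(B, C_Z); and (b) if C_Z = C ∩ (Y_1 + Z) and y_2 ∈ E(B, C_Z), then y_1 + y_2 ∈ E(Y_1 + B, C). -/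
/-!
Everything rests on the uniqueness of the decomposition `y + z` with `y ∈ Y₁`, `z ∈ Z`.
For (a), a competitor `v ∈ B` with `y₂ - v = Π_Z c`, `c = y + (y₂ - v) ∈ C`, yields the competitor
`(y₁ - y) + v ∈ Y₁ + B` of `y₁ + y₂`, whose `Z`-component must then be `y₂`. For (b), a competitor
`u + v` of `y₁ + y₂` has `y₁ + y₂ - (u + v) ∈ C ∩ (Y₁ + Z) ⊆ C_Z`, and comparing components forces
`y₂ - v ∈ C_Z`, hence `v = y₂` and then `u = y₁`.
-/

open Set Pointwise

/-- The set of Pareto efficient points of `Ω` with respect to the cone `K`: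
points `ω ∈ Ω` such that there is no `v ∈ Ω \ {ω}` with `ω - v ∈ K`. -/
def paretoEff {α : Type*} [AddCommGroup α] (K Ω : Set α) : Set α :=
  {ω ∈ Ω | ∀ v ∈ Ω, ω - v ∈ K → v = ω}

namespace Submodule

variable {R M : Type*} [Ring R] [AddCommGroup M] [Module R M] {Y₁ Z : Submodule R M}

theorem eq_and_eq_of_add_eq_add_of_disjoint (h : Disjoint Y₁ Z) {a a' : M} (ha : a ∈ Y₁)
    (ha' : a' ∈ Y₁) {b b' : Z} (heq : a + b = a' + b') : a = a' ∧ b = b' := by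
  have hb : b - b' = 0 := by
    rw [← mem_left_iff_eq_zero_of_disjoint h]
    convert sub_mem ha' ha using 1
    push_cast
    linear_combination (norm := module) heq
  obtain rfl := sub_eq_zero.mp hb
  exact ⟨add_right_cancel heq, rfl⟩

variable (Y₁ Z)

/-- The cone `C_Z = Π_Z ((Y₁ + Z) ∩ C)`, where `Π_Z (y + z) = z` for `y ∈ Y₁`, `z ∈ Z`. -/
def projCone (C : Set M) : Set Z :=
  {z | ∃ y ∈ Y₁, y + (z : M) ∈ C}

variable {Y₁ Z}

theorem mem_paretoEff_projCone (h : Disjoint Y₁ Z) {C : Set M} {B : Set Z} {y₁ : Y₁} {y₂ : Z}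
    (hy₂ : y₂ ∈ B) (heff : (y₁ : M) + y₂ ∈ paretoEff C ((Y₁ : Set M) + Subtype.val '' B)) :
    y₂ ∈ paretoEff (projCone Y₁ Z C) B := by
  refine ⟨hy₂, fun v hv ⟨y, hy, hyC⟩ ↦ ?_⟩
  have hw : ((y₁ : M) - y) + v ∈ (Y₁ : Set M) + Subtype.val '' B :=
    ⟨_, sub_mem y₁.2 hy, v, ⟨v, hv, rfl⟩, rfl⟩
  have hsub : (y₁ : M) + y₂ - (((y₁ : M) - y) + v) ∈ C := by
    convert hyC using 1
    push_cast
    abel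
  exact (eq_and_eq_of_add_eq_add_of_disjoint h (sub_mem y₁.2 hy) y₁.2
    (heff.2 _ hw hsub)).2

theorem add_mem_paretoEff_of_mem_paretoEff (h : Disjoint Y₁ Z) {C : Set M} {CZ B : Set Z}
    (hCZ : C ∩ ((Y₁ : Set M) + (Z : Set M)) ⊆ Subtype.val '' CZ) {y₁ : Y₁} {y₂ : Z}
    (heff : y₂ ∈ paretoEff CZ B) :
    (y₁ : M) + y₂ ∈ paretoEff C ((Y₁ : Set M) + Subtype.val '' B) := by
  refine ⟨⟨y₁, y₁.2, y₂, ⟨y₂, heff.1, rfl⟩, rfl⟩, ?_⟩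
  rintro _ ⟨u, hu, _, ⟨v, hv, rfl⟩, rfl⟩ hsub
  obtain ⟨z, hz, hzeq⟩ := hCZ ⟨hsub, (y₁ : M) - u, sub_mem y₁.2 hu, ↑(y₂ - v), (y₂ - v).2,
    by push_cast; abel⟩
  have hdecomp : ((y₁ : M) - u) + ↑(y₂ - v) = 0 + z := by
    rw [hzeq]
    push_cast
    abel
  obtain ⟨hu₁, hz₂⟩ := eq_and_eq_of_add_eq_add_of_disjoint h (sub_mem y₁.2 hu) Y₁.zero_mem hdecomp
  obtain rfl : v = y₂ := heff.2 v hv (hz₂ ▸ hz)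
  rw [← sub_eq_zero.mp hu₁]

end Submodule

theorem stmt_17_general {Y : Type*} [NormedAddCommGroup Y] [NormedSpace ℝ Y]
    (Y1 Z : Submodule ℝ Y) (hinf : Y1 ⊓ Z = ⊥)
    (C : Set Y)
    (CZ : Set Z) (hCZ : CZ = {z : Z | ∃ y ∈ Y1, y + (z : Y) ∈ C})
    (B : Set Z) (y1 : Y1) (y2 : Z) (hy2 : y2 ∈ B) :
    (((y1 : Y) + (y2 : Y)) ∈ paretoEff C ((Y1 : Set Y) + Subtype.val '' B) →
      y2 ∈ paretoEff CZ B) ∧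
    ((Subtype.val '' CZ = C ∩ ((Y1 : Set Y) + (Z : Set Y)) ∧
        y2 ∈ paretoEff CZ B) →
      ((y1 : Y) + (y2 : Y)) ∈ paretoEff C ((Y1 : Set Y) + Subtype.val '' B)) := by
  have hdisj : Disjoint Y1 Z := disjoint_iff.mpr hinf
  exact ⟨fun heff ↦ hCZ ▸ Submodule.mem_paretoEff_projCone hdisj hy2 heff,
    fun ⟨hset, heff⟩ ↦ Submodule.add_mem_paretoEff_of_mem_paretoEff hdisj hset.ge heff⟩

/-- With `C_Z = Π_Z ((Y₁ + Z) ∩ C)`: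
(a) if `y₁ + y₂ ∈ E(Y₁ + B, C)` then `y₂ ∈ E(B, C_Z)`;
(b) if moreover `C_Z = C ∩ (Y₁ + Z)` and `y₂ ∈ E(B, C_Z)` then
`y₁ + y₂ ∈ E(Y₁ + B, C)`. -/
theorem stmt_17 {Y : Type*} [NormedAddCommGroup Y] [NormedSpace ℝ Y]
    (Y1 Z : Submodule ℝ Y) (hinf : Y1 ⊓ Z = ⊥)
    (C : Set Y) (hCconv : Convex ℝ C)
    (hCcone : ∀ t : ℝ, 0 ≤ t → t • C ⊆ C) (h0 : (0 : Y) ∈ C)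
    (CZ : Set Z) (hCZ : CZ = {z : Z | ∃ y ∈ Y1, y + (z : Y) ∈ C})
    (B : Set Z) (y1 : Y1) (y2 : Z) (hy2 : y2 ∈ B) :
    (((y1 : Y) + (y2 : Y)) ∈ paretoEff C ((Y1 : Set Y) + Subtype.val '' B) →
      y2 ∈ paretoEff CZ B) ∧
    ((Subtype.val '' CZ = C ∩ ((Y1 : Set Y) + (Z : Set Y)) ∧
        y2 ∈ paretoEff CZ B) →
      ((y1 : Y) + (y2 : Y)) ∈ paretoEff C ((Y1 : Set Y) + Subtype.val '' B)) :=
  stmt_17_general Y1 Z hinf C CZ hCZ B y1 y2 hy2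
end

section
/- Let Y be a real vector space, C a convex cone in Y with 0 ∈ C, and B_1, …, B_m subsets of Y. Then E(⋃_{i=1}^m B_i, C) = ⋃_{i=1}^m ⋂_{j=1}^m ( E(B_i, C) \ ((B_j + C) \ E(B_j, C)) ). -/
/-!
A point of a union `⋃ⱼ Bⱼ` can only be dominated by points of those `Bⱼ` it lies in
`Bⱼ + C`; and if `ω ∈ Bⱼ + C` is efficient in a superset of `Bⱼ`, then the point of `Bⱼ`
below it must be `ω` itself, so `ω` is efficient in `Bⱼ`. Hence `ω` is efficient in the
union iff it lies in some `Bᵢ` and is efficient in every `Bⱼ` with `ω ∈ Bⱼ + C`.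
-/

open Set Pointwise

section ParetoEff

variable {α ι : Type*} [AddCommGroup α] {K Ω Ω' : Set α} {ω : α}

theorem paretoEff_subset : paretoEff K Ω ⊆ Ω := fun _ h => h.1

theorem mem_paretoEff_of_subset (hω : ω ∈ paretoEff K Ω) (hΩ' : Ω' ⊆ Ω) (hωΩ' : ω ∈ Ω') :
    ω ∈ paretoEff K Ω' :=
  ⟨hωΩ', fun v hv hvω => hω.2 v (hΩ' hv) hvω⟩

theorem mem_paretoEff_of_mem_add (hω : ω ∈ paretoEff K Ω) (hΩ' : Ω' ⊆ Ω) (hωΩ' : ω ∈ Ω' + K) :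
    ω ∈ paretoEff K Ω' := by
  obtain ⟨b, hb, c, hc, hbc⟩ := hωΩ'
  have hbω : b = ω := hω.2 b (hΩ' hb) (by rwa [← hbc, add_sub_cancel_left])
  exact mem_paretoEff_of_subset hω hΩ' (hbω ▸ hb)

theorem mem_paretoEff_iUnion_iff {B : ι → Set α} :
    ω ∈ paretoEff K (⋃ j, B j) ↔
      ω ∈ ⋃ j, B j ∧ ∀ j, ω ∈ B j + K → ω ∈ paretoEff K (B j) := by
  refine ⟨fun h => ⟨h.1, fun j => mem_paretoEff_of_mem_add h (subset_iUnion B j)⟩, ?_⟩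
  rintro ⟨hω, heff⟩
  refine ⟨hω, fun v hv hvω => ?_⟩
  obtain ⟨j, hvj⟩ := mem_iUnion.1 hv
  exact (heff j ⟨v, hvj, ω - v, hvω, add_sub_cancel v ω⟩).2 v hvj hvω

end ParetoEff

theorem stmt_18_general {Y : Type*} [AddCommGroup Y]
    (C : Set Y)
    {m : ℕ} (B : Fin m → Set Y) :
    paretoEff C (⋃ i, B i) =
      ⋃ i, ⋂ j, (paretoEff C (B i) \ ((B j + C) \ paretoEff C (B j))) := by
  ext ω
  simp only [mem_iUnion, mem_iInter, mem_sdiff, not_and, not_not]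
  constructor
  · intro h
    obtain ⟨hω, heff⟩ := mem_paretoEff_iUnion_iff.1 h
    obtain ⟨i, hi⟩ := mem_iUnion.1 hω
    exact ⟨i, fun j => ⟨mem_paretoEff_of_subset h (subset_iUnion B i) hi, heff j⟩⟩
  · rintro ⟨i, hi⟩
    exact mem_paretoEff_iUnion_iff.2
      ⟨mem_iUnion.2 ⟨i, paretoEff_subset (hi i).1⟩, fun j => (hi j).2⟩

/-- The Pareto efficient points of a finite union:
`E(⋃ᵢ Bᵢ, C) = ⋃ᵢ ⋂ⱼ (E(Bᵢ, C) \ ((Bⱼ + C) \ E(Bⱼ, C)))`. -/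
theorem stmt_18 {Y : Type*} [AddCommGroup Y] [Module ℝ Y]
    (C : Set Y) (hCconv : Convex ℝ C)
    (hCcone : ∀ t : ℝ, 0 ≤ t → t • C ⊆ C) (h0 : (0 : Y) ∈ C)
    {m : ℕ} (B : Fin m → Set Y) :
    paretoEff C (⋃ i, B i) =
      ⋃ i, ⋂ j, (paretoEff C (B i) \ ((B j + C) \ paretoEff C (B j))) :=
  stmt_18_general C B
end
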